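/- arXiv:1207.2638 — 9 statements merged into one kernel-verified Lean document; each statement's English description precedes it below -/
import Mathlib

section
/- Let (X, 𝒜, μ) be a σ-finite measure space and φ : X → X a nonsingular transformation such that h_φ < ∞ a.e. [μ]. Then the restriction of μ to the σ-algebra φ⁻¹(𝒜) is σ-finite. -/
open MeasureTheory

/-- If `φ` is nonsingular and `h_φ < ⊤` a.e. `[μ]`, then the restriction of `μ`
to the sub-σ-algebra `φ⁻¹(𝒜)` is σ-finite. -/
theorem stmt_3 {X : Type*} [m : MeasurableSpace X] (μ : Measure X) [SigmaFinite μ]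
    (φ : X → X) (hφ : Measurable φ) (hns : μ.map φ ≪ μ)
    (hfin : ∀ᵐ x ∂μ, (μ.map φ).rnDeriv μ x < ⊤) :
    SigmaFinite (μ.trim (measurable_iff_comap_le.mp hφ)) := by
  have hmap : SigmaFinite (μ.map φ) := by
    rw [← Measure.withDensity_rnDeriv_eq _ _ hns]
    exact SigmaFinite.withDensity_of_ne_top (hfin.mono fun x hx => hx.ne)
  refine @SigmaFinite.mk _ _ _ ⟨?_⟩
  refine { set := fun n => φ ⁻¹' spanningSets (μ.map φ) n,
           set_mem := fun _ => trivial,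
           finite := fun n => ?_,
           spanning := ?_ }
  · have hmeas : MeasurableSet[MeasurableSpace.comap φ m] (φ ⁻¹' spanningSets (μ.map φ) n) :=
      ⟨spanningSets (μ.map φ) n, measurableSet_spanningSets _ n, rfl⟩
    rw [trim_measurableSet_eq _ hmeas,
      ← Measure.map_apply hφ (measurableSet_spanningSets _ n)]
    exact measure_spanningSets_lt_top _ n
  · rw [← Set.preimage_iUnion, iUnion_spanningSets, Set.preimage_univ]
end

section
/- Let (X, 𝒜, μ) be a σ-finite measure space and φ : X → X a nonsingular transformation. Then the composition operator C_φ is densely defined in L²(μ) if and only if h_φ < ∞ a.e. [μ]. -/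
open MeasureTheory Filter Set
open scoped ENNReal Topology

namespace Stmt7Aux

variable {X : Type*} [MeasurableSpace X] {μ : Measure X} {φ : X → X}

lemma key [SigmaFinite μ] (hφ : Measurable φ) (hns : μ.map φ ≪ μ) {f : X → ℂ}
    (hf : AEMeasurable f μ) :
    ∫⁻ x, (‖f (φ x)‖₊ : ℝ≥0∞) ^ (2 : ℝ) ∂μ
      = ∫⁻ x, (μ.map φ).rnDeriv μ x * (‖f x‖₊ : ℝ≥0∞) ^ (2 : ℝ) ∂μ := by
  have hfm : AEMeasurable f (μ.map φ) := hf.mono_ac hns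
  have h1 : ∫⁻ x, (‖f (φ x)‖₊ : ℝ≥0∞) ^ (2 : ℝ) ∂μ
      = ∫⁻ y, (‖f y‖₊ : ℝ≥0∞) ^ (2 : ℝ) ∂(μ.map φ) :=
    (lintegral_map' (hfm.enorm.pow_const _) hφ.aemeasurable).symm
  rw [h1]
  conv_lhs => rw [← Measure.withDensity_rnDeriv_eq _ _ hns]
  rw [lintegral_withDensity_eq_lintegral_mul₀' ((μ.map φ).measurable_rnDeriv μ).aemeasurable
    (by rw [Measure.withDensity_rnDeriv_eq _ _ hns]; exact hfm.enorm.pow_const _)]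
  rfl

lemma mem_iff [SigmaFinite μ] (hφ : Measurable φ) (hns : μ.map φ ≪ μ) {f : X → ℂ}
    (hf : MemLp f 2 μ) :
    MemLp (fun x => f (φ x)) 2 μ ↔
      ∫⁻ x, (μ.map φ).rnDeriv μ x * (‖f x‖₊ : ℝ≥0∞) ^ (2 : ℝ) ∂μ < ∞ := by
  have hfa : AEMeasurable f μ := hf.aestronglyMeasurable.aemeasurable
  have hsm : AEStronglyMeasurable (fun x => f (φ x)) μ :=
    (hf.aestronglyMeasurable.mono_ac hns).comp_aemeasurable hφ.aemeasurable
  have h2 : ((2 : ℝ≥0∞)).toReal = (2 : ℝ) := by norm_num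
  constructor
  · intro h
    rw [← key hφ hns hfa]
    have := lintegral_rpow_enorm_lt_top_of_eLpNorm_lt_top (f := fun x => f (φ x))
      (two_ne_zero) (by norm_num) h.2
    rwa [h2] at this
  · intro h
    refine ⟨hsm, ?_⟩
    rw [eLpNorm_lt_top_iff_lintegral_rpow_enorm_lt_top two_ne_zero (by norm_num), h2]
    exact (key hφ hns hfa).trans_lt h

end Stmt7Aux

open Stmt7Aux

/-- The composition operator `C_φ` (with domain `{f ∈ L²(μ) : f∘φ ∈ L²(μ)}`)
is densely defined in `L²(μ)` iff `h_φ < ∞` a.e. `[μ]`. -/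
theorem stmt_7 {X : Type*} [MeasurableSpace X] (μ : Measure X) [SigmaFinite μ]
    (φ : X → X) (hφ : Measurable φ) (hns : μ.map φ ≪ μ) :
    Dense {f : Lp ℂ 2 μ | MemLp (fun x => f (φ x)) 2 μ} ↔
      ∀ᵐ x ∂μ, (μ.map φ).rnDeriv μ x < ⊤ := by
  classical
  set h : X → ℝ≥0∞ := (μ.map φ).rnDeriv μ with hh
  have hm : Measurable h := (μ.map φ).measurable_rnDeriv μ
  have h2 : ((2 : ℝ≥0∞)).toReal = (2 : ℝ) := by norm_num
  constructor
  · -- Dense → h < ∞ a.e.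
    intro hdense
    by_contra hae
    have hA : μ {x | h x = ⊤} ≠ 0 := by
      intro h0
      refine hae ?_
      rw [ae_iff]
      convert h0 using 2
      ext x
      simp [lt_top_iff_ne_top]
    have hAm : MeasurableSet {x | h x = ⊤} := hm (measurableSet_singleton ⊤)
    obtain ⟨B, hB, hBA, hB0, hBfin⟩ :=
      MeasureTheory.Measure.exists_subset_measure_lt_top hAm (pos_iff_ne_zero.mpr hA)
    set g : Lp ℂ 2 μ := (memLp_indicator_const 2 hB (1 : ℂ) (Or.inr hBfin.ne)).toLp _ with hgdef
    set ε : ℝ := ((μ B) ^ (1/2 : ℝ)).toReal with hε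
    have hεpos : 0 < ε := by
      apply ENNReal.toReal_pos
      · simp only [ne_eq, ENNReal.rpow_eq_zero_iff, not_or]
        constructor
        · rintro ⟨h1, -⟩; exact hB0.ne' h1
        · rintro ⟨h1, -⟩; exact hBfin.ne h1
      · exact (ENNReal.rpow_lt_top_of_nonneg (by norm_num) hBfin.ne).ne
    obtain ⟨f, hfS, hdist⟩ := Metric.mem_closure_iff.mp (hdense g) ε hεpos
    have hint := (mem_iff hφ hns (Lp.memLp f)).mp hfS
    have hmul : AEMeasurable (fun x => h x * (‖f x‖₊ : ℝ≥0∞) ^ (2 : ℝ)) μ :=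
      hm.aemeasurable.mul ((Lp.aestronglyMeasurable f).aemeasurable.enorm.pow_const _)
    have hae2 : ∀ᵐ x ∂μ, h x * (‖f x‖₊ : ℝ≥0∞) ^ (2 : ℝ) < ⊤ := ae_lt_top' hmul hint.ne
    have hf0 : ∀ᵐ x ∂μ, x ∈ B → f x = 0 := by
      filter_upwards [hae2] with x hx hxB
      by_contra hne
      have htop : h x = ⊤ := hBA hxB
      rw [htop] at hx
      have hpos : (0:ℝ≥0∞) < (‖f x‖₊ : ℝ≥0∞) ^ (2 : ℝ) := by
        apply ENNReal.rpow_pos _ ENNReal.coe_ne_top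
        simpa using hne
      rw [ENNReal.top_mul hpos.ne'] at hx
      exact (lt_irrefl _ hx).elim
    -- lower bound on the distance
    have hBint : ∫⁻ x in B, (‖g x - f x‖₊ : ℝ≥0∞) ^ (2 : ℝ) ∂μ = μ B := by
      have hcongr : (fun x => (‖g x - f x‖₊ : ℝ≥0∞) ^ (2 : ℝ))
          =ᵐ[μ.restrict B] fun _ => 1 := by
        filter_upwards [ae_restrict_of_ae ((memLp_indicator_const 2 hB (1 : ℂ) (Or.inr hBfin.ne)).coeFn_toLp), ae_restrict_of_ae hf0,
          ae_restrict_mem hB] with x hgx hfx hxB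
        rw [hgx, hfx hxB, indicator_of_mem hxB]
        simp
      rw [lintegral_congr_ae hcongr, setLIntegral_one]
    have hle : μ B ≤ ∫⁻ x, (‖g x - f x‖₊ : ℝ≥0∞) ^ (2 : ℝ) ∂μ := by
      rw [← hBint]; exact setLIntegral_le_lintegral B _
    have heq : eLpNorm (⇑g - ⇑f) 2 μ
        = (∫⁻ x, (‖g x - f x‖₊ : ℝ≥0∞) ^ (2 : ℝ) ∂μ) ^ (1/2 : ℝ) := by
      rw [eLpNorm_eq_lintegral_rpow_enorm_toReal two_ne_zero (by norm_num), h2]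
      rfl
    have hlow : (μ B) ^ (1/2 : ℝ) ≤ eLpNorm (⇑g - ⇑f) 2 μ := by
      rw [heq]; exact ENNReal.rpow_le_rpow hle (by norm_num)
    have hfin' : eLpNorm (⇑g - ⇑f) 2 μ ≠ ⊤ := by
      rw [← eLpNorm_congr_ae (Lp.coeFn_sub g f)]
      exact (Lp.eLpNorm_lt_top (g - f)).ne
    have : ε ≤ dist g f := by
      rw [Lp.dist_def]
      exact ENNReal.toReal_mono hfin' hlow
    exact absurd hdist (not_lt.mpr this)
  · -- h < ∞ a.e. → Dense
    intro hfin f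
    set s : ℕ → Set X := fun n => {x | h x ≤ n} with hsdef
    have hs : ∀ n, MeasurableSet (s n) := fun n => hm measurableSet_Iic
    set g : ℕ → X → ℂ := fun n => (s n).indicator ⇑f with hgdef
    have hg : ∀ n, MemLp (g n) 2 μ := fun n => (Lp.memLp f).indicator (hs n)
    set F : ℕ → Lp ℂ 2 μ := fun n => (hg n).toLp _ with hFdef
    have hfl2 : ∫⁻ x, (‖f x‖₊ : ℝ≥0∞) ^ (2 : ℝ) ∂μ < ∞ := by
      have := lintegral_rpow_enorm_lt_top_of_eLpNorm_lt_top (f := ⇑f) two_ne_zero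
        (by norm_num) (Lp.eLpNorm_lt_top f)
      rwa [h2] at this
    -- each F n is in the domain
    have hmemF : ∀ n, F n ∈ {f : Lp ℂ 2 μ | MemLp (fun x => f (φ x)) 2 μ} := by
      intro n
      have hgn : MemLp (fun x => g n (φ x)) 2 μ := by
        rw [mem_iff hφ hns (hg n)]
        have hb : ∫⁻ x, h x * (‖g n x‖₊ : ℝ≥0∞) ^ (2 : ℝ) ∂μ
            ≤ ∫⁻ x, (n : ℝ≥0∞) * (‖f x‖₊ : ℝ≥0∞) ^ (2 : ℝ) ∂μ := by
          apply lintegral_mono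
          intro x
          by_cases hx : x ∈ s n
          · rw [hgdef]; simp only [indicator_of_mem hx]
            exact mul_le_mul' hx le_rfl
          · rw [hgdef]; simp only [indicator_of_notMem hx]
            simp [ENNReal.zero_rpow_of_pos (by norm_num : (0:ℝ) < 2)]
        calc ∫⁻ x, h x * (‖g n x‖₊ : ℝ≥0∞) ^ (2 : ℝ) ∂μ
            ≤ ∫⁻ x, (n : ℝ≥0∞) * (‖f x‖₊ : ℝ≥0∞) ^ (2 : ℝ) ∂μ := hb
          _ = (n : ℝ≥0∞) * ∫⁻ x, (‖f x‖₊ : ℝ≥0∞) ^ (2 : ℝ) ∂μ :=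
              lintegral_const_mul' _ _ (by simp)
          _ < ∞ := ENNReal.mul_lt_top (by simp) hfl2
      have hco : (fun x => g n (φ x)) =ᵐ[μ] fun x => (F n) (φ x) := by
        have : g n =ᵐ[μ.map φ] ⇑(F n) := hns.ae_eq ((hg n).coeFn_toLp).symm
        exact ae_eq_comp hφ.aemeasurable this
      exact hgn.ae_eq hco
    -- F n → f
    have hIto0 : Tendsto (fun n => ∫⁻ x, (‖g n x - f x‖₊ : ℝ≥0∞) ^ (2 : ℝ) ∂μ) atTop (𝓝 0) := by
      have h0 : (0 : ℝ≥0∞) = ∫⁻ _, (0 : ℝ≥0∞) ∂μ := by simp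
      rw [h0]
      apply tendsto_lintegral_of_dominated_convergence' (fun x => (‖f x‖₊ : ℝ≥0∞) ^ (2 : ℝ))
      · intro n
        exact (((hg n).aestronglyMeasurable.sub
          (Lp.aestronglyMeasurable f)).aemeasurable.enorm.pow_const _)
      · intro n
        refine Eventually.of_forall fun x => ?_
        apply ENNReal.rpow_le_rpow _ (by norm_num)
        rw [ENNReal.coe_le_coe]
        by_cases hx : x ∈ s n
        · rw [hgdef]; simp [indicator_of_mem hx]
        · rw [hgdef]; simp [indicator_of_notMem hx]
      · exact hfl2.ne
      · filter_upwards [hfin] with x hx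
        obtain ⟨n₀, hn₀⟩ := ENNReal.exists_nat_gt hx.ne
        apply tendsto_atTop_of_eventually_const (i₀ := n₀)
        intro n hn
        have hxs : x ∈ s n := by
          rw [hsdef]
          exact le_trans hn₀.le (by exact_mod_cast Nat.cast_le.mpr hn)
        rw [hgdef]
        simp [indicator_of_mem hxs, ENNReal.zero_rpow_of_pos (by norm_num : (0:ℝ) < 2)]
    have heLp : Tendsto (fun n => eLpNorm (g n - ⇑f) 2 μ) atTop (𝓝 0) := by
      have hc : Continuous fun a : ℝ≥0∞ => a ^ (1/2 : ℝ) := ENNReal.continuous_rpow_const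
      have := (hc.tendsto 0).comp hIto0
      simp only [Function.comp_def, ENNReal.zero_rpow_of_pos (by norm_num : (0:ℝ) < 1/2)] at this
      convert this using 2 with n
      rw [eLpNorm_eq_lintegral_rpow_enorm_toReal two_ne_zero (by norm_num), h2]
      rfl
    have hdist : Tendsto (fun n => dist (F n) f) atTop (𝓝 0) := by
      have : ∀ n, dist (F n) f = (eLpNorm (g n - ⇑f) 2 μ).toReal := by
        intro n
        rw [Lp.dist_def]
        congr 1
        apply eLpNorm_congr_ae
        exact ((hg n).coeFn_toLp).sub (Filter.EventuallyEq.refl _ _)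
      simp only [this]
      have := (ENNReal.tendsto_toReal (by simp : (0:ℝ≥0∞) ≠ ⊤)).comp heLp
      exact this
    exact mem_closure_of_tendsto (tendsto_iff_dist_tendsto_zero.mpr hdist)
      (Eventually.of_forall hmemF)
end

section
/- Let (X, 𝒜, μ) be a σ-finite measure space and φ : X → X a nonsingular transformation such that C_φ is densely defined and quasinormal. Then h_φ > 0 a.e. [μ]. -/
open MeasureTheory
open scoped ENNReal

/-- If `C_φ` is densely defined and quasinormal (equivalently,
`h_φ = h_φ∘φ` a.e. `[μ]`), then `h_φ > 0` a.e. `[μ]`. -/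
theorem stmt_11 {X : Type*} [MeasurableSpace X] (μ : Measure X) [SigmaFinite μ]
    (φ : X → X) (hφ : Measurable φ) (hns : μ.map φ ≪ μ)
    (hdense : Dense {f : Lp ℂ 2 μ | MemLp (fun x => f (φ x)) 2 μ})
    (hqn : (μ.map φ).rnDeriv μ =ᵐ[μ] fun x => (μ.map φ).rnDeriv μ (φ x)) :
    ∀ᵐ x ∂μ, 0 < (μ.map φ).rnDeriv μ x := by
  set h := (μ.map φ).rnDeriv μ with hh
  have hmeas : Measurable h := Measure.measurable_rnDeriv _ _
  have hS : MeasurableSet {x | h x = 0} := hmeas (measurableSet_singleton 0)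
  -- μ.map φ = μ.withDensity h
  have hwd : μ.withDensity h = μ.map φ := Measure.withDensity_rnDeriv_eq _ _ hns
  have hzero : μ (φ ⁻¹' {x | h x = 0}) = 0 := by
    rw [← Measure.map_apply hφ hS, ← hwd, withDensity_apply _ hS]
    calc ∫⁻ x in {x | h x = 0}, h x ∂μ
        = ∫⁻ _ in {x | h x = 0}, 0 ∂μ := by
          apply setLIntegral_congr_fun hS
          intro x hx
          exact hx
      _ = 0 := by simp
  have hcomp : ∀ᵐ x ∂μ, h (φ x) ≠ 0 := by
    rw [ae_iff]
    simpa using hzero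
  filter_upwards [hqn, hcomp] with x hx1 hx2
  rw [hx1]
  exact hx2.bot_lt
end

section
/- Let (X, 𝒜, μ) be a σ-finite measure space and φ : X → X a nonsingular transformation with 0 < h_φ < ∞ a.e. [μ]. Let P : X × ℬ([0,∞)) → [0,1] be an 𝒜-measurable family of probability measures satisfying the consistency condition. Then for every n ∈ ℕ∪{0}, h_{φⁿ}(x) = ∫_{[0,∞)} tⁿ P(x,dt) for μ-a.e. x ∈ X. -/
open MeasureTheory
open scoped ENNReal NNReal

/-- `g` is (a version of) the conditional expectation of the nonnegative measurable
function `f` with respect to the sub-σ-algebra `φ⁻¹(𝒜)`. -/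
def IsCondExp {X : Type*} [m : MeasurableSpace X] (μ : Measure X) (φ : X → X)
    (f g : X → ℝ≥0∞) : Prop :=
  Measurable[MeasurableSpace.comap φ m] g ∧
    ∀ Δ : Set X, MeasurableSet Δ →
      ∫⁻ x in φ ⁻¹' Δ, f x ∂μ = ∫⁻ x in φ ⁻¹' Δ, g x ∂μ

/-- If `0 < h_φ < ∞` a.e. `[μ]` and `P` is an `𝒜`-measurable family of Borel
probability measures on `[0,∞)` satisfying the consistency condition, then
`h_{φⁿ}(x) = ∫ tⁿ P(x,dt)` for `μ`-a.e. `x` and every `n ≥ 0`. -/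
theorem stmt_13 {X : Type*} [m : MeasurableSpace X] (μ : Measure X) [SigmaFinite μ]
    (φ : X → X) (hφ : Measurable φ) (hns : μ.map φ ≪ μ)
    (hpos : ∀ᵐ x ∂μ, 0 < (μ.map φ).rnDeriv μ x)
    (hfin : ∀ᵐ x ∂μ, (μ.map φ).rnDeriv μ x < ⊤)
    (P : X → Measure ℝ≥0) (hP : ∀ x, IsProbabilityMeasure (P x))
    (hPmeas : ∀ σ : Set ℝ≥0, MeasurableSet σ → Measurable fun x => P x σ)
    (hCC : ∀ σ : Set ℝ≥0, MeasurableSet σ →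
      ∃ g : X → ℝ≥0∞, IsCondExp μ φ (fun x => P x σ) g ∧
        g =ᵐ[μ] fun x =>
          (∫⁻ t in σ, (t : ℝ≥0∞) ∂P (φ x)) / (μ.map φ).rnDeriv μ (φ x)) :
    ∀ n : ℕ, (μ.map φ^[n]).rnDeriv μ =ᵐ[μ]
      fun x => ∫⁻ t, (t : ℝ≥0∞) ^ n ∂P x := by
  by_cases hLD : (μ.map φ).HaveLebesgueDecomposition μ
  swap
  · -- degenerate case: the Radon–Nikodym derivative is the junk value `0`,
    -- so `hpos` forces `μ = 0` and the statement is trivial.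
    rw [Measure.rnDeriv_of_not_haveLebesgueDecomposition hLD] at hpos
    simp only [Pi.zero_apply, lt_self_iff_false] at hpos
    have hμ : μ = 0 := ae_eq_bot.mp (Filter.eventually_false_iff_eq_bot.mp hpos)
    intro n
    simp [hμ, Filter.EventuallyEq, ae_zero]
  haveI := hLD
  set h : X → ℝ≥0∞ := (μ.map φ).rnDeriv μ with hh
  have hhm : Measurable h := Measure.measurable_rnDeriv _ _
  have hPm : Measurable P := Measure.measurable_of_measurable_coe P hPmeas
  have hFm : ∀ f : ℝ≥0 → ℝ≥0∞, Measurable f →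
      Measurable fun x => ∫⁻ t, f t ∂P x :=
    fun f hf => (Measure.measurable_lintegral hf).comp hPm
  have hRm : ∀ f : ℝ≥0 → ℝ≥0∞, Measurable f →
      Measurable fun x => (∫⁻ t, (t : ℝ≥0∞) * f t ∂P (φ x)) / h (φ x) :=
    fun f hf =>
      ((Measure.measurable_lintegral (measurable_coe_nnreal_ennreal.mul hf)).comp
        (hPm.comp hφ)).div (hhm.comp hφ)
  have hmap : μ.withDensity h = μ.map φ := Measure.withDensity_rnDeriv_eq _ _ hns
  -- Key step: the consistency condition extended from indicators to all
  -- nonnegative measurable functions on `[0,∞)`.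
  have key : ∀ ⦃f : ℝ≥0 → ℝ≥0∞⦄, Measurable f → ∀ A : Set X, MeasurableSet A →
      ∫⁻ x in φ ⁻¹' A, (∫⁻ t, f t ∂P x) ∂μ
        = ∫⁻ x in φ ⁻¹' A, (∫⁻ t, (t : ℝ≥0∞) * f t ∂P (φ x)) / h (φ x) ∂μ := by
    refine fun f hf => Measurable.ennreal_induction
      (motive := fun f => ∀ A : Set X, MeasurableSet A →
        ∫⁻ x in φ ⁻¹' A, (∫⁻ t, f t ∂P x) ∂μ
          = ∫⁻ x in φ ⁻¹' A, (∫⁻ t, (t : ℝ≥0∞) * f t ∂P (φ x)) / h (φ x) ∂μ)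
      ?_ ?_ ?_ hf
    · -- indicator functions: this is exactly the consistency condition
      intro c σ hσ A hA
      obtain ⟨g, ⟨-, hg2⟩, hgae⟩ := hCC σ hσ
      have e1 : ∀ x, (∫⁻ t, σ.indicator (fun _ => c) t ∂P x) = c * P x σ := fun x =>
        lintegral_indicator_const hσ c
      have e2 : (fun t : ℝ≥0 => (t : ℝ≥0∞) * σ.indicator (fun _ => c) t)
          = σ.indicator fun t : ℝ≥0 => (t : ℝ≥0∞) * c := by
        funext t
        by_cases ht : t ∈ σ <;>
          simp [Set.indicator_of_mem, Set.indicator_of_notMem, ht]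
      have e3 : ∀ y, (∫⁻ t, (t : ℝ≥0∞) * σ.indicator (fun _ => c) t ∂P y)
          = c * ∫⁻ t in σ, (t : ℝ≥0∞) ∂P y := by
        intro y
        rw [e2, lintegral_indicator hσ, ← lintegral_const_mul c
          (by fun_prop : Measurable fun t : ℝ≥0 => (t : ℝ≥0∞))]
        simp [mul_comm]
      have hrm : Measurable fun x => (∫⁻ t in σ, (t : ℝ≥0∞) ∂P (φ x)) / h (φ x) := by
        simp_rw [← lintegral_indicator hσ]
        exact ((Measure.measurable_lintegral
          (measurable_coe_nnreal_ennreal.indicator hσ)).comp (hPm.comp hφ)).div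
          (hhm.comp hφ)
      simp only [e1, e3, mul_div_assoc]
      rw [lintegral_const_mul c (hPmeas σ hσ), hg2 A hA,
        lintegral_congr_ae (ae_restrict_of_ae hgae),
        lintegral_const_mul c hrm]
    · -- additivity
      intro f g _ hfm hgm Pf Pg A hA
      have e1 : ∀ x, (∫⁻ t, (f + g) t ∂P x)
          = (∫⁻ t, f t ∂P x) + ∫⁻ t, g t ∂P x := fun x => by
        simp only [Pi.add_apply]; exact lintegral_add_left hfm _
      have e2 : ∀ y, (∫⁻ t, (t : ℝ≥0∞) * (f + g) t ∂P y)
          = (∫⁻ t, (t : ℝ≥0∞) * f t ∂P y) + ∫⁻ t, (t : ℝ≥0∞) * g t ∂P y := fun y => by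
        simp only [Pi.add_apply, mul_add]
        exact lintegral_add_left (measurable_coe_nnreal_ennreal.mul hfm) _
      simp only [e1, e2, ENNReal.add_div]
      rw [lintegral_add_left (hFm f hfm), lintegral_add_left (hRm f hfm),
        Pf A hA, Pg A hA]
    · -- monotone suprema
      intro f hfm hmono Pn A hA
      have e1 : ∀ x, (∫⁻ t, ⨆ n, f n t ∂P x) = ⨆ n, ∫⁻ t, f n t ∂P x := fun x =>
        lintegral_iSup hfm hmono
      have e2 : ∀ y, (∫⁻ t, (t : ℝ≥0∞) * ⨆ n, f n t ∂P y)
          = ⨆ n, ∫⁻ t, (t : ℝ≥0∞) * f n t ∂P y := fun y => by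
        simp_rw [ENNReal.mul_iSup]
        exact lintegral_iSup (fun n => measurable_coe_nnreal_ennreal.mul (hfm n))
          (fun i j hij t => mul_le_mul_right (hmono hij t) _)
      calc ∫⁻ x in φ ⁻¹' A, (∫⁻ t, ⨆ n, f n t ∂P x) ∂μ
          = ⨆ n, ∫⁻ x in φ ⁻¹' A, (∫⁻ t, f n t ∂P x) ∂μ := by
            simp_rw [e1]
            exact lintegral_iSup (fun n => hFm _ (hfm n))
              (fun i j hij x => lintegral_mono fun t => hmono hij t)
        _ = ⨆ n, ∫⁻ x in φ ⁻¹' A,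
              (∫⁻ t, (t : ℝ≥0∞) * f n t ∂P (φ x)) / h (φ x) ∂μ :=
            iSup_congr fun n => Pn n A hA
        _ = ∫⁻ x in φ ⁻¹' A, (∫⁻ t, (t : ℝ≥0∞) * ⨆ n, f n t ∂P (φ x)) / h (φ x) ∂μ := by
            simp_rw [e2, ENNReal.iSup_div]
            exact (lintegral_iSup (fun n => hRm _ (hfm n))
              (fun i j hij x => ENNReal.div_le_div_right
                (lintegral_mono fun t => mul_le_mul_right (hmono hij t) _) _)).symm
  have hpow : ∀ n : ℕ, Measurable fun t : ℝ≥0 => (t : ℝ≥0∞) ^ n :=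
    fun n => measurable_coe_nnreal_ennreal.pow_const n
  have hF : ∀ n : ℕ, Measurable fun x => ∫⁻ t, (t : ℝ≥0∞) ^ n ∂P x :=
    fun n => hFm _ (hpow n)
  -- main induction
  have main : ∀ n : ℕ,
      μ.map φ^[n] = μ.withDensity fun x => ∫⁻ t, (t : ℝ≥0∞) ^ n ∂P x := by
    intro n
    induction n with
    | zero =>
      have e0 : (fun x => ∫⁻ t, (t : ℝ≥0∞) ^ 0 ∂P x) = (1 : X → ℝ≥0∞) := by
        funext x
        simp [(hP x).measure_univ]
      rw [e0, withDensity_one, Function.iterate_zero, Measure.map_id]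
    | succ n ih =>
      ext A hA
      have hpre : φ^[n + 1] ⁻¹' A = φ^[n] ⁻¹' (φ ⁻¹' A) := by
        rw [Function.iterate_succ']; rfl
      have hmul : ∀ t : ℝ≥0, (t : ℝ≥0∞) * (t : ℝ≥0∞) ^ n = (t : ℝ≥0∞) ^ (n + 1) :=
        fun t => (pow_succ' (t : ℝ≥0∞) n).symm
      have hG : Measurable fun y => (∫⁻ t, (t : ℝ≥0∞) ^ (n + 1) ∂P y) / h y :=
        (hF (n + 1)).div hhm
      calc (μ.map φ^[n + 1]) A
          = μ (φ^[n] ⁻¹' (φ ⁻¹' A)) := by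
            rw [Measure.map_apply (hφ.iterate (n + 1)) hA, hpre]
        _ = (μ.map φ^[n]) (φ ⁻¹' A) :=
            (Measure.map_apply (hφ.iterate n) (hφ hA)).symm
        _ = ∫⁻ x in φ ⁻¹' A, (∫⁻ t, (t : ℝ≥0∞) ^ n ∂P x) ∂μ := by
            rw [ih, withDensity_apply _ (hφ hA)]
        _ = ∫⁻ x in φ ⁻¹' A, (∫⁻ t, (t : ℝ≥0∞) ^ (n + 1) ∂P (φ x)) / h (φ x) ∂μ := by
            rw [key (hpow n) A hA]
            simp_rw [hmul]
        _ = ∫⁻ y in A, (∫⁻ t, (t : ℝ≥0∞) ^ (n + 1) ∂P y) / h y ∂μ.map φ :=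
            (setLIntegral_map hA hG hφ).symm
        _ = ∫⁻ y in A, h y * ((∫⁻ t, (t : ℝ≥0∞) ^ (n + 1) ∂P y) / h y) ∂μ := by
            rw [← hmap, restrict_withDensity hA,
              lintegral_withDensity_eq_lintegral_mul _ hhm hG]
            rfl
        _ = ∫⁻ y in A, (∫⁻ t, (t : ℝ≥0∞) ^ (n + 1) ∂P y) ∂μ :=
            lintegral_congr_ae (ae_restrict_of_ae ((hpos.and hfin).mono
              fun y ⟨h0, ht⟩ => ENNReal.mul_div_cancel h0.ne' ht.ne))
        _ = (μ.withDensity fun x => ∫⁻ t, (t : ℝ≥0∞) ^ (n + 1) ∂P x) A :=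
            (withDensity_apply _ hA).symm
  intro n
  rw [main n]
  exact Measure.rnDeriv_withDensity μ (hF n)
end

section
/- Let (X, 𝒜, μ) be a σ-finite measure space and φ : X → X a nonsingular transformation such that C_φ is densely defined. Then C_φ is quasinormal if and only if for every Borel set σ ⊆ [0,∞), (χ_σ ∘ h_φ ∘ φ) · (χ_σ ∘ h_φ) = χ_σ ∘ h_φ ∘ φ a.e. [μ]. -/
open MeasureTheory
open scoped ENNReal

/-- Quasinormality of the composition operator `C_φ` (for a closed densely defined
operator `A = U|A|`, quasinormality means `U|A| ⊆ |A|U`), which for composition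
operators is equivalent to `h_φ = h_φ∘φ` a.e. `[μ]`. -/
def QuasinormalComposition {X : Type*} [MeasurableSpace X] (μ : Measure X)
    (φ : X → X) : Prop :=
  (μ.map φ).rnDeriv μ =ᵐ[μ] fun x => (μ.map φ).rnDeriv μ (φ x)

/-- If `C_φ` is densely defined then `h_φ` is a.e. finite. -/
lemma rnDeriv_ae_ne_top_of_dense {X : Type*} [MeasurableSpace X] (μ : Measure X) [SigmaFinite μ]
    (φ : X → X) (hφ : Measurable φ) (hns : μ.map φ ≪ μ)
    (hdense : Dense {f : Lp ℂ 2 μ | MemLp (fun x => f (φ x)) 2 μ}) :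
    ∀ᵐ x ∂μ, (μ.map φ).rnDeriv μ x ≠ ∞ := by
  set h := (μ.map φ).rnDeriv μ with hh
  have hhm : Measurable h := Measure.measurable_rnDeriv _ _
  rw [ae_iff]
  simp only [not_not]
  by_contra hA
  have hAm : MeasurableSet {x | h x = ∞} := hhm (measurableSet_singleton ∞)
  have hApos : 0 < μ {x | h x = ∞} := pos_iff_ne_zero.2 hA
  obtain ⟨B, hBm, hBA, hBpos, hBfin⟩ := Measure.exists_subset_measure_lt_top hAm hApos
  -- the indicator of B as an element of L²
  set g : Lp ℂ 2 μ := indicatorConstLp 2 hBm hBfin.ne (1 : ℂ) with hg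
  set E : ℝ≥0∞ := μ B ^ (1 / (2 : ℝ≥0∞).toReal) with hE
  have hE0 : 0 < E := ENNReal.rpow_pos hBpos hBfin.ne
  have hEtop : E ≠ ∞ := by
    refine (ENNReal.rpow_lt_top_of_nonneg (by norm_num) hBfin.ne).ne
  have hεpos : 0 < E.toReal := ENNReal.toReal_pos hE0.ne' hEtop
  obtain ⟨f, hfS, hdist⟩ := Metric.mem_closure_iff.1 (hdense g) E.toReal hεpos
  -- `f` vanishes a.e. on `{h = ∞}`
  have hfm : Measurable (⇑f) := (Lp.stronglyMeasurable f).measurable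
  set F : X → ℝ≥0∞ := fun y => (‖f y‖₊ : ℝ≥0∞) ^ (2 : ℕ) with hF
  have hFm : Measurable F := (hfm.nnnorm.coe_nnreal_ennreal).pow_const _
  have hint : ∫⁻ x, h x * F x ∂μ < ∞ := by
    have h1 : ∫⁻ x, (‖f (φ x)‖₊ : ℝ≥0∞) ^ ((2 : ℝ≥0∞).toReal) ∂μ < ∞ :=
      lintegral_rpow_enorm_lt_top_of_eLpNorm_lt_top (by norm_num) (by norm_num)
        hfS.2
    have h2 : ∀ y : X, (‖f y‖₊ : ℝ≥0∞) ^ ((2 : ℝ≥0∞).toReal) = F y := by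
      intro y
      have : ((2 : ℝ≥0∞).toReal) = ((2 : ℕ) : ℝ) := by norm_num
      rw [this, ENNReal.rpow_natCast]
    have h3 : ∫⁻ x, F (φ x) ∂μ < ∞ := by
      refine lt_of_eq_of_lt ?_ h1
      exact lintegral_congr fun x => (h2 (φ x)).symm
    have h4 : ∫⁻ x, F (φ x) ∂μ = ∫⁻ y, F y ∂(μ.map φ) := (lintegral_map hFm hφ).symm
    have h5 : μ.map φ = μ.withDensity h := (Measure.withDensity_rnDeriv_eq _ _ hns).symm
    have h6 : ∫⁻ y, F y ∂(μ.map φ) = ∫⁻ x, (h * F) x ∂μ := by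
      rw [h5]; exact lintegral_withDensity_eq_lintegral_mul μ hhm hFm
    calc ∫⁻ x, h x * F x ∂μ = ∫⁻ x, F (φ x) ∂μ := by rw [h4, h6]; rfl
      _ < ∞ := h3
  have hnull : μ {x | h x = ∞ ∧ F x ≠ 0} = 0 := by
    by_contra hs
    have hsm : MeasurableSet {x | h x = ∞ ∧ F x ≠ 0} :=
      (hhm (measurableSet_singleton ∞)).inter (hFm (measurableSet_singleton 0)).compl
    have hub : ∫⁻ _ in {x | h x = ∞ ∧ F x ≠ 0}, (∞ : ℝ≥0∞) ∂μ ≤ ∫⁻ x, h x * F x ∂μ := by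
      refine le_trans (setLIntegral_mono' hsm ?_) (setLIntegral_le_lintegral _ _)
      intro x hx
      rw [hx.1, ENNReal.top_mul hx.2]
    rw [setLIntegral_const, ENNReal.top_mul hs] at hub
    exact absurd (lt_of_le_of_lt hub hint) (lt_irrefl _)
  have hf0 : ∀ᵐ x ∂μ, x ∈ {x | h x = ∞} → f x = 0 := by
    have : ∀ᵐ x ∂μ, ¬(h x = ∞ ∧ F x ≠ 0) := by
      rw [ae_iff]; simpa using hnull
    filter_upwards [this] with x hx hxA
    by_contra hfx
    exact hx ⟨hxA, by simp [hF, hfx]⟩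
  -- On `B`, `g - f = 1` a.e., so `dist g f ≥ E.toReal`
  have hgB : ∀ᵐ x ∂(μ.restrict B), g x = 1 := by
    have := Filter.EventuallyEq.restrict (μ := μ) (s := B)
      (indicatorConstLp_coeFn (p := 2) (hs := hBm) (hμs := hBfin.ne) (c := (1 : ℂ)))
    filter_upwards [this, ae_restrict_mem hBm] with x hx hxB
    rw [hx, Set.indicator_of_mem hxB]
  have hfB : ∀ᵐ x ∂(μ.restrict B), f x = 0 := by
    filter_upwards [ae_restrict_of_ae hf0, ae_restrict_mem hBm] with x hx hxB
    exact hx (hBA hxB)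
  have hsub : (⇑g - ⇑f) =ᵐ[μ.restrict B] fun _ => (1 : ℂ) := by
    filter_upwards [hgB, hfB] with x hx1 hx2
    simp [hx1, hx2]
  have hrB : μ.restrict B Set.univ = μ B := by
    rw [Measure.restrict_apply_univ]
  have hlow : E ≤ eLpNorm (⇑g - ⇑f) 2 μ := by
    have h1 : eLpNorm (⇑g - ⇑f) 2 (μ.restrict B) ≤ eLpNorm (⇑g - ⇑f) 2 μ :=
      eLpNorm_mono_measure _ Measure.restrict_le_self
    have h2 : eLpNorm (⇑g - ⇑f) 2 (μ.restrict B) = E := by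
      rw [eLpNorm_congr_ae hsub, eLpNorm_const _ (by norm_num)
        (by rw [Ne, Measure.restrict_eq_zero]; exact hBpos.ne')]
      simp [hrB, hE]
    exact h2 ▸ h1
  have htop : eLpNorm (⇑g - ⇑f) 2 μ ≠ ∞ := by
    rw [← eLpNorm_congr_ae (Lp.coeFn_sub g f)]
    exact Lp.eLpNorm_ne_top (g - f)
  have : E.toReal ≤ dist g f := by
    rw [Lp.dist_def]
    exact ENNReal.toReal_le_toReal hEtop htop |>.2 hlow
  exact absurd hdist (not_lt.2 this)

/-- `C_φ` is quasinormal iff for every Borel set `σ ⊆ [0,∞)`,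
`(χ_σ∘h_φ∘φ)·(χ_σ∘h_φ) = χ_σ∘h_φ∘φ` a.e. `[μ]`. -/
theorem stmt_14 {X : Type*} [MeasurableSpace X] (μ : Measure X) [SigmaFinite μ]
    (φ : X → X) (hφ : Measurable φ) (hns : μ.map φ ≪ μ)
    (hdense : Dense {f : Lp ℂ 2 μ | MemLp (fun x => f (φ x)) 2 μ}) :
    QuasinormalComposition μ φ ↔
      ∀ σ : Set ℝ≥0∞, MeasurableSet σ → ⊤ ∉ σ →
        (fun x => σ.indicator (1 : ℝ≥0∞ → ℝ≥0∞) ((μ.map φ).rnDeriv μ (φ x)) *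
            σ.indicator (1 : ℝ≥0∞ → ℝ≥0∞) ((μ.map φ).rnDeriv μ x)) =ᵐ[μ]
          fun x => σ.indicator (1 : ℝ≥0∞ → ℝ≥0∞) ((μ.map φ).rnDeriv μ (φ x)) := by
  set h := (μ.map φ).rnDeriv μ with hh
  have hhm : Measurable h := Measure.measurable_rnDeriv _ _
  constructor
  · intro hq σ hσm hσtop
    filter_upwards [hq] with x hx
    have hx' : h x = h (φ x) := hx
    rw [hx']
    by_cases ht : h (φ x) ∈ σ
    · rw [Set.indicator_of_mem ht]; simp
    · rw [Set.indicator_of_notMem ht]; simp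
  · intro H
    have hfin : ∀ᵐ x ∂μ, h x ≠ ∞ := rnDeriv_ae_ne_top_of_dense μ φ hφ hns hdense
    have hset : μ {x | h x = ∞} = 0 := by
      have := hfin; rw [ae_iff] at this; simpa using this
    have hfinφ : ∀ᵐ x ∂μ, h (φ x) ≠ ∞ := by
      rw [ae_iff]
      simp only [not_not]
      have : μ (φ ⁻¹' (h ⁻¹' {∞})) = 0 := by
        rw [← Measure.map_apply hφ (hhm (measurableSet_singleton ∞))]
        exact hns hset
      exact this
    have Hle : ∀ᵐ x ∂μ, ∀ q : ℚ,
        (Set.Iic ((Real.toNNReal q : ℝ≥0∞))).indicator (1 : ℝ≥0∞ → ℝ≥0∞) (h (φ x)) *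
          (Set.Iic ((Real.toNNReal q : ℝ≥0∞))).indicator (1 : ℝ≥0∞ → ℝ≥0∞) (h x) =
          (Set.Iic ((Real.toNNReal q : ℝ≥0∞))).indicator (1 : ℝ≥0∞ → ℝ≥0∞) (h (φ x)) := by
      rw [ae_all_iff]
      intro q
      exact H _ measurableSet_Iic (by simp)
    have Hgt : ∀ᵐ x ∂μ, ∀ q : ℚ,
        (Set.Ioo ((Real.toNNReal q : ℝ≥0∞)) ∞).indicator (1 : ℝ≥0∞ → ℝ≥0∞) (h (φ x)) *
          (Set.Ioo ((Real.toNNReal q : ℝ≥0∞)) ∞).indicator (1 : ℝ≥0∞ → ℝ≥0∞) (h x) =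
          (Set.Ioo ((Real.toNNReal q : ℝ≥0∞)) ∞).indicator (1 : ℝ≥0∞ → ℝ≥0∞) (h (φ x)) := by
      rw [ae_all_iff]
      intro q
      exact H _ measurableSet_Ioo (by simp)
    filter_upwards [hfin, hfinφ, Hle, Hgt] with x hx hxφ h1 h2
    have key : ∀ σ : Set ℝ≥0∞,
        σ.indicator (1 : ℝ≥0∞ → ℝ≥0∞) (h (φ x)) * σ.indicator (1 : ℝ≥0∞ → ℝ≥0∞) (h x) =
          σ.indicator (1 : ℝ≥0∞ → ℝ≥0∞) (h (φ x)) →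
        h (φ x) ∈ σ → h x ∈ σ := by
      intro σ hyp hmem
      by_contra hn
      rw [Set.indicator_of_mem hmem, Set.indicator_of_notMem hn, mul_zero] at hyp
      simp at hyp
    show h x = h (φ x)
    apply le_antisymm
    · by_contra hlt
      push_neg at hlt
      obtain ⟨q, _, hq1, hq2⟩ := ENNReal.lt_iff_exists_rat_btwn.1 hlt
      have := key _ (h1 q) (Set.mem_Iic.2 hq1.le)
      exact absurd (Set.mem_Iic.1 this) (not_le.2 hq2)
    · by_contra hlt
      push_neg at hlt
      obtain ⟨q, _, hq1, hq2⟩ := ENNReal.lt_iff_exists_rat_btwn.1 hlt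
      have := key _ (h2 q) (Set.mem_Ioo.2 ⟨hq2, lt_top_iff_ne_top.2 hxφ⟩)
      exact absurd (Set.mem_Ioo.1 this).1 (not_lt.2 hq1.le)
end

section
/- Let (X, 𝒜, μ) be a σ-finite measure space and φ : X → X a nonsingular transformation such that C_φ is densely defined. Then C_φ is quasinormal if and only if for every Borel set σ ⊆ [0,∞), E(χ_σ ∘ h_φ) = χ_σ ∘ h_φ ∘ φ a.e. [μ]. -/
open MeasureTheory Set
open scoped ENNReal

section Aux


variable {X : Type*} [m : MeasurableSpace X]

private lemma comap_meas' (φ : X → X) {w : X → ℝ≥0∞}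
    (hw : Measurable w) : Measurable[MeasurableSpace.comap φ m] fun x => w (φ x) :=
  fun s hs => ⟨w ⁻¹' s, hw hs, rfl⟩

/-- Forward uniqueness core: two `comap φ m`-measurable functions with equal lintegrals on all
`φ ⁻¹' Δ`, the second bounded by 1, agree a.e. on any finite-measure comap-measurable set. -/
private lemma unique_core (φ : X → X) (hφ : Measurable φ) (μ : Measure X)
    {g G : X → ℝ≥0∞} (hg : Measurable[MeasurableSpace.comap φ m] g)
    (hG : Measurable[MeasurableSpace.comap φ m] G) (hG1 : ∀ x, G x ≤ 1)
    (hint : ∀ S : Set X, MeasurableSet[MeasurableSpace.comap φ m] S →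
      ∫⁻ x in S, g x ∂μ = ∫⁻ x in S, G x ∂μ)
    {A : Set X} (hA : MeasurableSet[MeasurableSpace.comap φ m] A) (hAfin : μ A ≠ ∞) :
    μ (A ∩ {x | g x ≠ G x}) = 0 := by
  have hm' : MeasurableSpace.comap φ m ≤ m := hφ.comap_le
  have hgm : Measurable g := hg.mono hm' le_rfl
  have hGm : Measurable G := hG.mono hm' le_rfl
  -- generic one-sided estimate
  have side : ∀ (u v : X → ℝ≥0∞), Measurable[MeasurableSpace.comap φ m] u →
      Measurable[MeasurableSpace.comap φ m] v →
      (∀ S : Set X, MeasurableSet[MeasurableSpace.comap φ m] S →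
        ∫⁻ x in S, u x ∂μ = ∫⁻ x in S, v x ∂μ) →
      (∀ S : Set X, MeasurableSet[MeasurableSpace.comap φ m] S → S ⊆ A →
        ∫⁻ x in S, u x ∂μ ≠ ∞) →
      μ (A ∩ {x | u x < v x}) = 0 := by
    intro u v hu hv huv hufin
    have hvm : Measurable v := hv.mono hm' le_rfl
    have hn : ∀ n : ℕ, μ (A ∩ {x | u x + (n : ℝ≥0∞)⁻¹ ≤ v x}) = 0 := by
      intro n
      set S := A ∩ {x | u x + (n : ℝ≥0∞)⁻¹ ≤ v x} with hSdef
      have hSm : MeasurableSet[MeasurableSpace.comap φ m] S :=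
        hA.inter (measurableSet_le (hu.add measurable_const) hv)
      have hufinS : ∫⁻ x in S, u x ∂μ ≠ ∞ := hufin S hSm Set.inter_subset_left
      have hle : ∫⁻ x in S, u x ∂μ + (n : ℝ≥0∞)⁻¹ * μ S ≤ ∫⁻ x in S, u x ∂μ := by
        have h1 : ∫⁻ x in S, u x ∂μ + (n : ℝ≥0∞)⁻¹ * μ S
            = ∫⁻ x in S, (u x + (n : ℝ≥0∞)⁻¹) ∂μ := by
          rw [lintegral_add_right _ measurable_const, setLIntegral_const]
        have h2 : ∫⁻ x in S, (u x + (n : ℝ≥0∞)⁻¹) ∂μ ≤ ∫⁻ x in S, v x ∂μ :=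
          setLIntegral_mono hvm fun x hx => hx.2
        rw [h1]
        exact h2.trans_eq (huv S hSm).symm
      have hc : (n : ℝ≥0∞)⁻¹ * μ S ≤ 0 := by
        have hle' : ∫⁻ x in S, u x ∂μ + (n : ℝ≥0∞)⁻¹ * μ S ≤ ∫⁻ x in S, u x ∂μ + 0 := by
          simpa using hle
        exact ENNReal.le_of_add_le_add_left hufinS hle'
      have : (n : ℝ≥0∞)⁻¹ * μ S = 0 := le_antisymm hc zero_le
      rcases mul_eq_zero.mp this with h | h
      · exact absurd h (ENNReal.inv_ne_zero.mpr (ENNReal.natCast_ne_top n))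
      · exact h
    have hsub : A ∩ {x | u x < v x} ⊆ ⋃ n : ℕ, A ∩ {x | u x + (n : ℝ≥0∞)⁻¹ ≤ v x} := by
      rintro x ⟨hxA, hx⟩
      obtain ⟨r, hr0, hr⟩ := ENNReal.lt_iff_exists_add_pos_lt.mp hx
      obtain ⟨n, hn'⟩ := ENNReal.exists_inv_nat_lt
        (by exact_mod_cast hr0.ne' : (r : ℝ≥0∞) ≠ 0)
      exact Set.mem_iUnion.mpr ⟨n, hxA, ((add_le_add_right hn'.le (u x)).trans hr.le)⟩
    exact measure_mono_null hsub (measure_iUnion_null hn)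
  have hGfin : ∀ S : Set X, MeasurableSet[MeasurableSpace.comap φ m] S → S ⊆ A →
      ∫⁻ x in S, G x ∂μ ≠ ∞ := by
    intro S _ hSA
    refine ((setLIntegral_mono measurable_const fun x _ => hG1 x).trans_eq
      (setLIntegral_one S)).trans_lt ?_ |>.ne
    exact (measure_mono hSA).trans_lt hAfin.lt_top
  have hgfin : ∀ S : Set X, MeasurableSet[MeasurableSpace.comap φ m] S → S ⊆ A →
      ∫⁻ x in S, g x ∂μ ≠ ∞ := by
    intro S hS hSA
    rw [hint S hS]
    exact hGfin S hS hSA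
  have h1 := side G g hG hg (fun S hS => (hint S hS).symm) hGfin
  have h2 := side g G hg hG hint hgfin
  have : A ∩ {x | g x ≠ G x} ⊆ (A ∩ {x | G x < g x}) ∪ (A ∩ {x | g x < G x}) := by
    rintro x ⟨hxA, hx⟩
    rcases lt_or_gt_of_ne hx with h | h
    · exact Or.inr ⟨hxA, h⟩
    · exact Or.inl ⟨hxA, h⟩
  exact measure_mono_null this (measure_union_null h1 h2)

private lemma ennreal_eq_of_rat {a b : ℝ≥0∞}
    (hab : ∀ q : ℚ, (a ≤ (Real.toNNReal q : ℝ≥0∞) → b ≤ (Real.toNNReal q : ℝ≥0∞)) ∧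
      (b ≤ (Real.toNNReal q : ℝ≥0∞) → a ≤ (Real.toNNReal q : ℝ≥0∞))) : a = b := by
  by_contra hne
  rcases lt_or_gt_of_ne hne with hlt | hlt
  · obtain ⟨q, _, h1, h2⟩ := ENNReal.lt_iff_exists_rat_btwn.mp hlt
    exact absurd ((hab q).1 h1.le) h2.not_ge
  · obtain ⟨q, _, h1, h2⟩ := ENNReal.lt_iff_exists_rat_btwn.mp hlt
    exact absurd ((hab q).2 h1.le) h2.not_ge


private lemma rnDeriv_ae_ne_top' {X : Type*} [m : MeasurableSpace X] (μ : Measure X)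
    [SigmaFinite μ] (φ : X → X) (hφ : Measurable φ) (hns : μ.map φ ≪ μ)
    (hdense : Dense {f : Lp ℂ 2 μ | MemLp (fun x => f (φ x)) 2 μ}) :
    ∀ᵐ x ∂μ, (μ.map φ).rnDeriv μ x ≠ ∞ := by
  set h := (μ.map φ).rnDeriv μ with hh
  have hmeas : Measurable h := Measure.measurable_rnDeriv _ _
  have H : μ.withDensity h = μ.map φ := Measure.withDensity_rnDeriv_eq _ _ hns
  rw [ae_iff]
  simp only [ne_eq, not_not]
  set S := {x | h x = ∞} with hS
  have hSm : MeasurableSet S := hmeas (measurableSet_singleton ∞)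
  by_contra hS0
  have hex : ∃ k, μ (S ∩ spanningSets μ k) ≠ 0 := by
    by_contra hall
    push_neg at hall
    refine hS0 ?_
    have hSeq : S = ⋃ k, S ∩ spanningSets μ k := by
      rw [← Set.inter_iUnion, iUnion_spanningSets, Set.inter_univ]
    rw [hSeq]
    exact measure_iUnion_null hall
  obtain ⟨k, hk⟩ := hex
  set S' := S ∩ spanningSets μ k with hS'
  have hS'm : MeasurableSet S' := hSm.inter (measurableSet_spanningSets μ k)
  have hS'top : μ S' ≠ ∞ :=
    ((measure_mono Set.inter_subset_right).trans_lt (measure_spanningSets_lt_top μ k)).ne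
  set ψ : Lp ℂ 2 μ := indicatorConstLp 2 hS'm hS'top (1 : ℂ) with hψ
  -- every member of the domain vanishes a.e. on S
  have hvanish : ∀ f : Lp ℂ 2 μ, MemLp (fun x => f (φ x)) 2 μ →
      ∀ᵐ x ∂μ, x ∈ S → f x = 0 := by
    intro f hf
    have fm : Measurable (f : X → ℂ) := (Lp.stronglyMeasurable f).measurable
    set F : X → ℝ≥0∞ := fun x => (‖f x‖₊ : ℝ≥0∞) ^ (2 : ℝ≥0∞).toReal with hF
    have Fm : Measurable F := fm.enorm.pow_const _
    have hlt : ∫⁻ x, F (φ x) ∂μ < ∞ := by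
      have := lintegral_rpow_enorm_lt_top_of_eLpNorm_lt_top (two_ne_zero) (by norm_num)
        hf.2
      exact this
    have heq : ∫⁻ x, F (φ x) ∂μ = ∫⁻ x, h x * F x ∂μ := by
      rw [← lintegral_map Fm hφ, ← H, lintegral_withDensity_eq_lintegral_mul _ hmeas Fm]
      rfl
    have hae := ae_lt_top (hmeas.mul Fm) (heq ▸ hlt).ne
    filter_upwards [hae] with x hx hxS
    by_contra hfx
    have hFx : F x ≠ 0 := by
      refine (ENNReal.rpow_pos ?_ ENNReal.coe_ne_top).ne'
      simpa using hfx
    rw [Pi.mul_apply, show h x = ∞ from hxS, ENNReal.top_mul hFx] at hx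
    exact absurd hx (lt_irrefl _)
  -- the distance bound
  have hBnd : ∀ f : Lp ℂ 2 μ, MemLp (fun x => f (φ x)) 2 μ →
      ((μ S') ^ (1 / 2 : ℝ)).toReal ≤ dist ψ f := by
    intro f hf
    have hf0 := hvanish f hf
    rw [Lp.dist_def]
    have key : μ S' ^ (1 / (2 : ℝ≥0∞).toReal) ≤ eLpNorm (⇑ψ - ⇑f) 2 μ := by
      rw [eLpNorm_eq_lintegral_rpow_enorm_toReal two_ne_zero (by norm_num)]
      refine ENNReal.rpow_le_rpow ?_ (by norm_num)
      have hae : ∀ᵐ x ∂μ.restrict S', (1 : ℝ≥0∞) = (‖(⇑ψ - ⇑f) x‖₊ : ℝ≥0∞) ^ (2 : ℝ≥0∞).toReal := by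
        have h1 : ∀ᵐ x ∂μ.restrict S', x ∈ S' := ae_restrict_mem hS'm
        have h2 : ∀ᵐ x ∂μ.restrict S', ψ x = S'.indicator (fun _ => (1:ℂ)) x :=
          ae_restrict_of_ae indicatorConstLp_coeFn
        have h3 : ∀ᵐ x ∂μ.restrict S', x ∈ S → f x = 0 := ae_restrict_of_ae hf0
        filter_upwards [h1, h2, h3] with x hx1 hx2 hx3
        rw [Pi.sub_apply, hx2, Set.indicator_of_mem hx1, hx3 (Set.inter_subset_left hx1)]
        norm_num
      calc μ S' = ∫⁻ _ in S', (1 : ℝ≥0∞) ∂μ := (setLIntegral_one S').symm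
        _ = ∫⁻ x in S', (‖(⇑ψ - ⇑f) x‖₊ : ℝ≥0∞) ^ (2 : ℝ≥0∞).toReal ∂μ :=
            lintegral_congr_ae hae
        _ ≤ ∫⁻ x, (‖(⇑ψ - ⇑f) x‖₊ : ℝ≥0∞) ^ (2 : ℝ≥0∞).toReal ∂μ :=
            setLIntegral_le_lintegral _ _
    have hcongr : eLpNorm (⇑ψ - ⇑f) 2 μ = eLpNorm (⇑(ψ - f)) 2 μ :=
      (eLpNorm_congr_ae (Lp.coeFn_sub ψ f)).symm
    have hne : eLpNorm (⇑ψ - ⇑f) 2 μ ≠ ∞ := by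
      rw [hcongr]; exact Lp.eLpNorm_ne_top _
    have := ENNReal.toReal_mono hne key
    simpa using this
  have hpos : 0 < ((μ S') ^ (1 / 2 : ℝ)).toReal := by
    refine ENNReal.toReal_pos ?_ ?_
    · exact (ENNReal.rpow_pos (pos_iff_ne_zero.mpr hk) hS'top).ne'
    · exact ENNReal.rpow_ne_top_of_nonneg (by norm_num) hS'top
  obtain ⟨f, hfD, hdist⟩ := Metric.mem_closure_iff.mp (hdense ψ) _ hpos
  exact absurd hdist (not_lt.mpr (hBnd f hfD))

end Aux

/-- `C_φ` is quasinormal iff for every Borel `σ ⊆ [0,∞)`,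
`E(χ_σ∘h_φ) = χ_σ∘h_φ∘φ` a.e. `[μ]`. -/
theorem stmt_15 {X : Type*} [m : MeasurableSpace X] (μ : Measure X) [SigmaFinite μ]
    (φ : X → X) (hφ : Measurable φ) (hns : μ.map φ ≪ μ)
    (hdense : Dense {f : Lp ℂ 2 μ | MemLp (fun x => f (φ x)) 2 μ}) :
    QuasinormalComposition μ φ ↔
      ∀ σ : Set ℝ≥0∞, MeasurableSet σ → ⊤ ∉ σ →
        ∀ g : X → ℝ≥0∞,
          IsCondExp μ φ (fun x => σ.indicator (1 : ℝ≥0∞ → ℝ≥0∞) ((μ.map φ).rnDeriv μ x)) g →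
            g =ᵐ[μ] fun x => σ.indicator (1 : ℝ≥0∞ → ℝ≥0∞) ((μ.map φ).rnDeriv μ (φ x)) := by
  rw [QuasinormalComposition]
  constructor
  · -- forward direction
    intro hq

    set h : X → ℝ≥0∞ := (μ.map φ).rnDeriv μ with hh
    have hmeas : Measurable h := Measure.measurable_rnDeriv _ _
    have H : μ.withDensity h = μ.map φ := Measure.withDensity_rnDeriv_eq _ _ hns
    intro σ hσ hσtop g hg
    obtain ⟨hgmeas, hgint⟩ := hg
    set G : X → ℝ≥0∞ := fun x => σ.indicator 1 (h (φ x)) with hGdef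
    set f : X → ℝ≥0∞ := fun x => σ.indicator 1 (h x) with hfdef
    have hind : Measurable fun a : ℝ≥0∞ => σ.indicator (1 : ℝ≥0∞ → ℝ≥0∞) a :=
      measurable_one.indicator hσ
    have hGcomap : Measurable[MeasurableSpace.comap φ m] G :=
      comap_meas' φ (hind.comp hmeas)
    have hG1 : ∀ x, G x ≤ 1 := by
      intro x
      by_cases hx : h (φ x) ∈ σ <;> simp [hGdef, Set.indicator, hx]
    have hm' : MeasurableSpace.comap φ m ≤ m := hφ.comap_le
    have hgm : Measurable g := hgmeas.mono hm' le_rfl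
    have hfG : f =ᵐ[μ] G := by
      filter_upwards [hq] with x hx
      simp only [hfdef, hGdef]
      rw [hx]
    have hgG : ∀ S : Set X, MeasurableSet[MeasurableSpace.comap φ m] S →
        ∫⁻ x in S, g x ∂μ = ∫⁻ x in S, G x ∂μ := by
      rintro S ⟨Δ, hΔ, rfl⟩
      exact (hgint Δ hΔ).symm.trans (lintegral_congr_ae (ae_restrict_of_ae hfG))
    -- the bad set
    set B := {x | g x ≠ G x} with hBdef
    -- part over N = {h ∘ φ = ∞}
    set N : Set X := φ ⁻¹' {x | h x = ∞} with hNdef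
    have hNtopm : MeasurableSet {x | h x = ∞} := hmeas (measurableSet_singleton ∞)
    have hNm : MeasurableSet N := hφ hNtopm
    have hgN : μ (N ∩ B) = 0 := by
      have hint : ∫⁻ x in N, g x ∂μ = ∫⁻ x in N, G x ∂μ := hgG N ⟨_, hNtopm, rfl⟩
      have hG0 : ∀ x ∈ N, G x = 0 := by
        intro x hx
        have : h (φ x) = ∞ := hx
        simp only [hGdef]
        rw [this]
        exact Set.indicator_of_notMem hσtop 1
      have hGz : ∫⁻ x in N, G x ∂μ = 0 := by
        rw [setLIntegral_congr_fun hNm hG0]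
        simp
      have hg0 : g =ᵐ[μ.restrict N] 0 := (lintegral_eq_zero_iff hgm).mp (hint.trans hGz)
      have hzero : μ.restrict N {x | g x ≠ 0} = 0 := hg0
      rw [Measure.restrict_apply' hNm] at hzero
      refine measure_mono_null ?_ hzero
      rintro x ⟨hxN, hxB⟩
      refine ⟨?_, hxN⟩
      have hxB' : g x ≠ G x := hxB
      rw [hG0 x hxN] at hxB'
      exact hxB'
    -- the sigma-finite part
    have hAnull : ∀ n k : ℕ,
        μ (φ ⁻¹' (spanningSets μ k ∩ {x | h x ≤ (n : ℝ≥0∞)}) ∩ B) = 0 := by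
      intro n k
      have hΔm : MeasurableSet (spanningSets μ k ∩ {x | h x ≤ (n : ℝ≥0∞)}) :=
        (measurableSet_spanningSets μ k).inter (hmeas measurableSet_Iic)
      have hAfin : μ (φ ⁻¹' (spanningSets μ k ∩ {x | h x ≤ (n : ℝ≥0∞)})) ≠ ∞ := by
        have h1 : μ (φ ⁻¹' (spanningSets μ k ∩ {x | h x ≤ (n : ℝ≥0∞)}))
            = ∫⁻ x in spanningSets μ k ∩ {x | h x ≤ (n : ℝ≥0∞)}, h x ∂μ := by
          rw [← Measure.map_apply hφ hΔm, ← H, withDensity_apply _ hΔm]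
        rw [h1]
        refine ((setLIntegral_mono measurable_const fun x hx => hx.2).trans_eq
          (setLIntegral_const _ _)).trans_lt ?_ |>.ne
        exact ENNReal.mul_lt_top (ENNReal.natCast_lt_top n)
          ((measure_mono Set.inter_subset_left).trans_lt (measure_spanningSets_lt_top μ k))
      exact unique_core φ hφ μ hgmeas hGcomap hG1 hgG ⟨_, hΔm, rfl⟩ hAfin
    -- combine
    have hcover : B ⊆ (N ∩ B) ∪
        ⋃ n : ℕ, ⋃ k : ℕ,
          (φ ⁻¹' (spanningSets μ k ∩ {x | h x ≤ (n : ℝ≥0∞)}) ∩ B) := by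
      intro x hx
      by_cases hxN : h (φ x) = ∞
      · exact Or.inl ⟨hxN, hx⟩
      · right
        obtain ⟨n, hn⟩ := ENNReal.exists_nat_gt (lt_top_iff_ne_top.mpr hxN).ne
        have hk : φ x ∈ ⋃ k, spanningSets μ k := by
          rw [iUnion_spanningSets]; trivial
        obtain ⟨k, hk⟩ := Set.mem_iUnion.mp hk
        exact Set.mem_iUnion.mpr ⟨n, Set.mem_iUnion.mpr ⟨k, ⟨⟨hk, hn.le⟩, hx⟩⟩⟩
    have : μ B = 0 := by
      refine measure_mono_null hcover (measure_union_null hgN ?_)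
      exact measure_iUnion_null fun n => measure_iUnion_null fun k => hAnull n k
    exact this

  · -- reverse direction
    intro rhs
    have hfin : ∀ᵐ x ∂μ, (μ.map φ).rnDeriv μ x ≠ ∞ :=
      rnDeriv_ae_ne_top' μ φ hφ hns hdense

    set h : X → ℝ≥0∞ := (μ.map φ).rnDeriv μ with hh
    have hmeas : Measurable h := Measure.measurable_rnDeriv _ _
    have H : μ.withDensity h = μ.map φ := Measure.withDensity_rnDeriv_eq _ _ hns
    set cq : ℚ → ℝ≥0∞ := fun q => ((Real.toNNReal (q : ℝ)) : ℝ≥0∞) with hcq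
    have hcqtop : ∀ q, cq q ≠ ∞ := fun q => by simp only [hcq]; exact ENNReal.coe_ne_top
    -- the key identity
    have key : ∀ q : ℚ, ∀ Δ : Set X, MeasurableSet Δ →
        μ (φ ⁻¹' Δ ∩ {x | h x ≤ cq q}) = μ (φ ⁻¹' Δ ∩ {x | h (φ x) ≤ cq q}) := by
      intro q
      set c : ℝ≥0∞ := cq q with hc
      set σ : Set ℝ≥0∞ := Set.Iic c with hσdef
      have hσm : MeasurableSet σ := measurableSet_Iic
      have hσtop : (⊤ : ℝ≥0∞) ∉ σ := fun hmem => hcqtop q (top_le_iff.mp hmem)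
      set f : X → ℝ≥0∞ := fun x => σ.indicator 1 (h x) with hfdef
      have indint : ∀ u : X → ℝ≥0∞, Measurable u → ∀ A : Set X, MeasurableSet A →
          ∫⁻ x in A, σ.indicator 1 (u x) ∂μ = μ (A ∩ {x | u x ≤ c}) := by
        intro u hu A hA
        have hset : MeasurableSet {x | u x ≤ c} := hu measurableSet_Iic
        have heq : (fun x => σ.indicator (1 : ℝ≥0∞ → ℝ≥0∞) (u x))
            = ({x | u x ≤ c}).indicator fun _ => (1 : ℝ≥0∞) := by
          funext x
          by_cases hx : u x ≤ c
          · rw [Set.indicator_of_mem (by exact hx : u x ∈ σ),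
              Set.indicator_of_mem (by exact hx)]
            rfl
          · rw [Set.indicator_of_notMem (by exact hx : u x ∉ σ),
              Set.indicator_of_notMem (by exact hx)]
        rw [heq, lintegral_indicator hset, Measure.restrict_restrict hset, setLIntegral_one,
          Set.inter_comm]
      have hfmeas : Measurable f := (measurable_one.indicator hσm).comp hmeas
      have hf1 : ∀ x, f x ≤ 1 := by
        intro x
        by_cases hx : h x ∈ σ <;> simp [hfdef, Set.indicator, hx]
      set ρ : Measure X := μ.withDensity f with hρ
      set ν : Measure X := ρ.map φ with hν
      have hρμ : ρ ≤ μ := by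
        calc ρ ≤ μ.withDensity 1 := withDensity_mono (ae_of_all _ hf1)
        _ = μ := withDensity_one
      have hνβ : ν ≤ μ.map φ := Measure.map_mono hρμ hφ
      have hνμ : ν ≪ μ := (Measure.absolutelyContinuous_of_le hνβ).trans hns
      set k : X → ℝ≥0∞ := ν.rnDeriv μ with hk
      have hkmeas : Measurable k := Measure.measurable_rnDeriv _ _
      have hνk : μ.withDensity k = ν := Measure.withDensity_rnDeriv_eq _ _ hνμ
      -- k vanishes a.e. where h vanishes
      have hZm : MeasurableSet {x | h x = 0} := hmeas (measurableSet_singleton 0)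
      have hk0 : ∀ᵐ x ∂μ, h x = 0 → k x = 0 := by
        have h1 : ∫⁻ x in {x | h x = 0}, k x ∂μ = ν {x | h x = 0} := by
          rw [← hνk, withDensity_apply _ hZm]
        have h2 : ν {x | h x = 0} ≤ (μ.map φ) {x | h x = 0} := hνβ _
        have h3 : (μ.map φ) {x | h x = 0} = ∫⁻ x in {x | h x = 0}, h x ∂μ := by
          rw [← H, withDensity_apply _ hZm]
        have h4 : ∫⁻ x in {x | h x = 0}, h x ∂μ = 0 := by
          rw [setLIntegral_congr_fun hZm fun x hx => hx]
          simp
        have h5 : ∫⁻ x in {x | h x = 0}, k x ∂μ = 0 :=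
          le_antisymm (h1.le.trans (h2.trans_eq (h3.trans h4))) zero_le
        have := (lintegral_eq_zero_iff hkmeas).mp h5
        have := ae_iff.mp this
        rw [Measure.restrict_apply' hZm] at this
        rw [ae_iff]
        refine measure_mono_null ?_ this
        intro x hx
        simp only [Set.mem_setOf_eq, not_forall] at hx ⊢
        exact ⟨hx.2, hx.1⟩
      set w : X → ℝ≥0∞ := fun x => k x / h x with hw
      have hwmeas : Measurable w := hkmeas.div hmeas
      have hhw : (fun x => h x * w x) =ᵐ[μ] k := by
        filter_upwards [hfin, hk0] with x hx1 hx2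
        by_cases hx0 : h x = 0
        · simp [hw, hx0, hx2 hx0]
        · exact ENNReal.mul_div_cancel hx0 hx1
      have hcond : IsCondExp μ φ f (fun x => w (φ x)) := by
        refine ⟨comap_meas' φ hwmeas, fun Δ hΔ => ?_⟩
        calc ∫⁻ x in φ ⁻¹' Δ, f x ∂μ = ρ (φ ⁻¹' Δ) := (withDensity_apply f (hφ hΔ)).symm
        _ = ν Δ := (Measure.map_apply hφ hΔ).symm
        _ = ∫⁻ x in Δ, k x ∂μ := by rw [← hνk, withDensity_apply _ hΔ]
        _ = ∫⁻ x in Δ, h x * w x ∂μ :=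
            (lintegral_congr_ae (ae_restrict_of_ae hhw)).symm
        _ = ∫⁻ x in Δ, w x ∂(μ.withDensity h) := by
            rw [restrict_withDensity hΔ, lintegral_withDensity_eq_lintegral_mul _ hmeas hwmeas]
            rfl
        _ = ∫⁻ x in Δ, w x ∂(μ.map φ) := by rw [H]
        _ = ∫⁻ x in φ ⁻¹' Δ, w (φ x) ∂μ := by
            rw [Measure.restrict_map hφ hΔ, lintegral_map hwmeas hφ]
      have hg := rhs σ hσm hσtop _ hcond
      intro Δ hΔ
      have hσpre : MeasurableSet (h ⁻¹' σ) := hmeas hσm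
      calc μ (φ ⁻¹' Δ ∩ {x | h x ≤ c}) = ∫⁻ x in φ ⁻¹' Δ, f x ∂μ :=
          (indint h hmeas _ (hφ hΔ)).symm
      _ = ∫⁻ x in φ ⁻¹' Δ, w (φ x) ∂μ := hcond.2 Δ hΔ
      _ = ∫⁻ x in φ ⁻¹' Δ, σ.indicator 1 (h (φ x)) ∂μ :=
          lintegral_congr_ae (ae_restrict_of_ae hg)
      _ = μ (φ ⁻¹' Δ ∩ {x | h (φ x) ≤ c}) := indint (fun x => h (φ x)) (hmeas.comp hφ) _ (hφ hΔ)
    -- null set 1 : a.e. h ≤ q → h∘φ ≤ q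
    have null1 : ∀ q : ℚ, μ ({x | h x ≤ cq q} ∩ {x | ¬ h (φ x) ≤ cq q}) = 0 := by
      intro q
      have hΔm : MeasurableSet {x | cq q < h x} := measurableSet_lt measurable_const hmeas
      have := key q _ hΔm
      have hz : μ (φ ⁻¹' {x | cq q < h x} ∩ {x | h (φ x) ≤ cq q}) = 0 := by
        refine measure_mono_null ?_ (measure_empty (μ := μ))
        rintro x ⟨hx1, hx2⟩
        have h1 : cq q < h (φ x) := hx1
        have h2 : h (φ x) ≤ cq q := hx2
        exact absurd h2 (not_le.mpr h1)
      rw [hz] at this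
      refine measure_mono_null ?_ this
      rintro x ⟨hx1, hx2⟩
      exact ⟨not_le.mp hx2, hx1⟩
    -- null set 2 : a.e. h∘φ ≤ q → h ≤ q
    have null2 : ∀ q : ℚ, μ ({x | h (φ x) ≤ cq q} ∩ {x | ¬ h x ≤ cq q}) = 0 := by
      intro q
      have piece : ∀ j : ℕ,
          μ (φ ⁻¹' (spanningSets μ j ∩ {x | h x ≤ cq q}) ∩ {x | ¬ h x ≤ cq q}) = 0 := by
        intro j
        set Δ := spanningSets μ j ∩ {x | h x ≤ cq q} with hΔdef
        have hΔm : MeasurableSet Δ :=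
          (measurableSet_spanningSets μ j).inter (hmeas measurableSet_Iic)
        have hsub : φ ⁻¹' Δ ⊆ {x | h (φ x) ≤ cq q} := fun x hx => hx.2
        have hfinA : μ (φ ⁻¹' Δ) ≠ ∞ := by
          have h1 : μ (φ ⁻¹' Δ) = ∫⁻ x in Δ, h x ∂μ := by
            rw [← Measure.map_apply hφ hΔm, ← H, withDensity_apply _ hΔm]
          rw [h1]
          refine ((setLIntegral_mono measurable_const fun x hx => hx.2).trans_eq
            (setLIntegral_const _ _)).trans_lt ?_ |>.ne
          exact ENNReal.mul_lt_top (hcqtop q).lt_top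
            ((measure_mono Set.inter_subset_left).trans_lt (measure_spanningSets_lt_top μ j))
        have hkey := key q Δ hΔm
        have h2 : μ (φ ⁻¹' Δ ∩ {x | h (φ x) ≤ cq q}) = μ (φ ⁻¹' Δ) := by
          rw [Set.inter_eq_self_of_subset_left hsub]
        rw [h2] at hkey
        -- μ (φ⁻¹Δ ∩ {h ≤ q}) = μ (φ⁻¹Δ) finite, so the complement part is null
        have hle_m : MeasurableSet {x | h x ≤ cq q} := hmeas measurableSet_Iic
        have h3 := measure_inter_add_diff (μ := μ) (φ ⁻¹' Δ) hle_m
        rw [hkey] at h3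
        have h4 : μ (φ ⁻¹' Δ) + μ (φ ⁻¹' Δ \ {x | h x ≤ cq q}) = μ (φ ⁻¹' Δ) + 0 := by
          rw [h3, add_zero]
        have h5 := (ENNReal.add_right_inj hfinA).mp h4
        refine measure_mono_null ?_ h5
        rintro x ⟨hx1, hx2⟩
        exact ⟨hx1, hx2⟩
      have hcover : {x | h (φ x) ≤ cq q} ∩ {x | ¬ h x ≤ cq q} ⊆
          ⋃ j : ℕ, φ ⁻¹' (spanningSets μ j ∩ {x | h x ≤ cq q}) ∩ {x | ¬ h x ≤ cq q} := by
        rintro x ⟨hx1, hx2⟩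
        have : φ x ∈ ⋃ j, spanningSets μ j := by rw [iUnion_spanningSets]; trivial
        obtain ⟨j, hj⟩ := Set.mem_iUnion.mp this
        exact Set.mem_iUnion.mpr ⟨j, ⟨⟨hj, hx1⟩, hx2⟩⟩
      exact measure_mono_null hcover (measure_iUnion_null piece)
    -- combine
    have hae : ∀ᵐ x ∂μ, ∀ q : ℚ,
        (h x ≤ cq q → h (φ x) ≤ cq q) ∧ (h (φ x) ≤ cq q → h x ≤ cq q) := by
      rw [ae_all_iff]
      intro q
      have := measure_union_null (null1 q) (null2 q)
      rw [ae_iff]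
      refine measure_mono_null ?_ this
      intro x hx
      simp only [Set.mem_setOf_eq, not_and_or, Classical.not_imp] at hx
      rcases hx with ⟨h1, h2⟩ | ⟨h1, h2⟩
      · exact Or.inl ⟨h1, h2⟩
      · exact Or.inr ⟨h1, h2⟩
    filter_upwards [hae] with x hx
    exact ennreal_eq_of_rat (fun q => by simpa only [hcq] using hx q)
end

section
/- Let (X, 𝒜, μ) be a σ-finite measure space and φ : X → X a nonsingular transformation such that C_φ is densely defined. Then C_φ is quasinormal if and only if for every Borel function f : [0,∞) → [0,∞], E(f ∘ h_φ) = f ∘ h_φ ∘ φ a.e. [μ]. -/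
open MeasureTheory
open scoped ENNReal

section Aux

variable {X : Type*} [m : MeasurableSpace X]

/-- Doob–Dynkin lemma for `ℝ≥0∞`-valued functions. -/
lemma exists_eq_comp_of_comap_measurable {φ : X → X} {g : X → ℝ≥0∞}
    (hg : Measurable[MeasurableSpace.comap φ m] g) :
    ∃ G : X → ℝ≥0∞, Measurable G ∧ ∀ x, g x = G (φ x) := by
  have hsets : ∀ q : ℚ, ∃ Δ : Set X, MeasurableSet Δ ∧
      φ ⁻¹' Δ = g ⁻¹' Set.Ioi (Real.toNNReal q : ℝ≥0∞) := by
    intro q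
    have : MeasurableSet[MeasurableSpace.comap φ m]
        (g ⁻¹' Set.Ioi (Real.toNNReal q : ℝ≥0∞)) := hg measurableSet_Ioi
    obtain ⟨Δ, hΔ, hpre⟩ := this
    exact ⟨Δ, hΔ, hpre⟩
  choose Δ hΔm hΔ using hsets
  refine ⟨fun y => ⨆ q : ℚ, (Δ q).indicator (fun _ => (Real.toNNReal q : ℝ≥0∞)) y,
    Measurable.iSup fun q => measurable_const.indicator (hΔm q), fun x => ?_⟩
  have hmem : ∀ q : ℚ, φ x ∈ Δ q ↔ (Real.toNNReal q : ℝ≥0∞) < g x := by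
    intro q
    have : x ∈ φ ⁻¹' Δ q ↔ x ∈ g ⁻¹' Set.Ioi (Real.toNNReal q : ℝ≥0∞) := by rw [hΔ q]
    simpa [Set.mem_preimage] using this
  apply le_antisymm
  · refine le_of_forall_lt fun b hb => ?_
    obtain ⟨q, _, hbq, hqa⟩ := ENNReal.lt_iff_exists_rat_btwn.1 hb
    have hqmem : φ x ∈ Δ q := (hmem q).2 hqa
    calc b < (Real.toNNReal q : ℝ≥0∞) := hbq
      _ = (Δ q).indicator (fun _ => (Real.toNNReal q : ℝ≥0∞)) (φ x) :=
        (Set.indicator_of_mem hqmem fun _ => (Real.toNNReal q : ℝ≥0∞)).symm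
      _ ≤ _ := le_iSup (fun q : ℚ => (Δ q).indicator
          (fun _ => (Real.toNNReal q : ℝ≥0∞)) (φ x)) q
  · refine iSup_le fun q => ?_
    by_cases hx : φ x ∈ Δ q
    · rw [Set.indicator_of_mem hx]
      exact ((hmem q).1 hx).le
    · rw [Set.indicator_of_notMem hx]
      exact zero_le

/-- Existence of a (nonnegative) conditional expectation with respect to `φ⁻¹(𝒜)`. -/
lemma exists_isCondExp (μ : Measure X) [SFinite μ] {φ : X → X} (hφ : Measurable φ)
    [SigmaFinite (μ.map φ)] {F : X → ℝ≥0∞} (_hF : Measurable F) :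
    ∃ g, IsCondExp μ φ F g := by
  set ν := (μ.withDensity F).map φ with hν_def
  have hν : ν ≪ μ.map φ := (withDensity_absolutelyContinuous μ F).map hφ
  haveI : SFinite ν := by rw [hν_def]; infer_instance
  refine ⟨fun x => ν.rnDeriv (μ.map φ) (φ x), ?_, ?_⟩
  · exact (Measure.measurable_rnDeriv _ _).comp (Measurable.of_comap_le le_rfl)
  · intro Δ hΔ
    rw [← setLIntegral_map hΔ (Measure.measurable_rnDeriv _ _) hφ,
      Measure.setLIntegral_rnDeriv hν, hν_def, Measure.map_apply hφ hΔ,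
      withDensity_apply _ (hφ hΔ)]

/-- If `C_φ` is densely defined then `h_φ < ∞` a.e. -/
lemma rnDeriv_ne_top_of_dense (μ : Measure X) [SigmaFinite μ] {φ : X → X}
    (hφ : Measurable φ) (hns : μ.map φ ≪ μ)
    (hdense : Dense {f : Lp ℂ 2 μ | MemLp (fun x => f (φ x)) 2 μ}) :
    ∀ᵐ x ∂μ, (μ.map φ).rnDeriv μ x ≠ ⊤ := by
  set h := (μ.map φ).rnDeriv μ with hh
  have hhm : Measurable h := Measure.measurable_rnDeriv _ _
  by_contra hcon
  have hApos : μ {x | h x = ⊤} ≠ 0 := by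
    rw [ae_iff] at hcon
    simpa [not_not] using hcon
  have hA : MeasurableSet {x | h x = ⊤} := hhm (measurableSet_singleton ⊤)
  obtain ⟨S, hSm, hSA, hSpos, hSfin⟩ :=
    Measure.exists_subset_measure_lt_top hA (pos_iff_ne_zero.2 hApos)
  set χ : Lp ℂ 2 μ := indicatorConstLp 2 hSm hSfin.ne (1 : ℂ) with hχ
  set ε : ℝ := ((μ S) ^ (1 / (2:ℝ))).toReal with hε_def
  have hε : 0 < ε := by
    apply ENNReal.toReal_pos
    · exact (ENNReal.rpow_pos hSpos hSfin.ne).ne'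
    · exact (ENNReal.rpow_lt_top_of_nonneg (by norm_num) hSfin.ne).ne
  obtain ⟨f, hfmem, hdist⟩ := hdense.exists_dist_lt χ hε
  -- `f` vanishes a.e. on `{h = ⊤}`
  have hfasm : AEStronglyMeasurable (f : X → ℂ) μ := Lp.aestronglyMeasurable f
  have hfaem : AEMeasurable (fun x => (‖(f : X → ℂ) x‖₊ : ℝ≥0∞) ^ 2) μ :=
    (hfasm.enorm.pow_const 2)
  have hpow : ∀ a : ℝ≥0∞, a ^ ((2:ℝ)) = a ^ (2:ℕ) := fun a => by
    rw [← ENNReal.rpow_natCast a 2]; norm_num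
  have hJ : ∫⁻ x, (‖(f : X → ℂ) (φ x)‖₊ : ℝ≥0∞) ^ (2:ℕ) ∂μ < ⊤ := by
    have h2 : eLpNorm (fun x => (f : X → ℂ) (φ x)) 2 μ < ⊤ := hfmem.2
    rw [eLpNorm_eq_eLpNorm' (by norm_num) (by norm_num)] at h2
    have := lintegral_rpow_enorm_lt_top_of_eLpNorm'_lt_top
      (q := (2:ℝ≥0∞).toReal) (f := fun x => (f : X → ℂ) (φ x)) (by norm_num) h2
    simpa [ENNReal.toReal_ofNat, hpow, enorm_eq_nnnorm] using this
  have hmap : ∫⁻ y, (‖(f : X → ℂ) y‖₊ : ℝ≥0∞) ^ (2:ℕ) ∂(μ.map φ)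
      = ∫⁻ x, (‖(f : X → ℂ) (φ x)‖₊ : ℝ≥0∞) ^ (2:ℕ) ∂μ := by
    refine lintegral_map' ?_ hφ.aemeasurable
    exact ((hfasm.mono_ac hns).enorm.pow_const 2)
  have hwd : μ.map φ = μ.withDensity h := (Measure.withDensity_rnDeriv_eq _ _ hns).symm
  have htot : ∫⁻ x, h x * (‖(f : X → ℂ) x‖₊ : ℝ≥0∞) ^ (2:ℕ) ∂μ < ⊤ := by
    have e := lintegral_withDensity_eq_lintegral_mul₀' (μ := μ) hhm.aemeasurable
      (g := fun x => (‖(f : X → ℂ) x‖₊ : ℝ≥0∞) ^ (2:ℕ))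
      (by rw [← hwd]; exact ((hfasm.mono_ac hns).enorm.pow_const 2))
    simp only [Pi.mul_apply] at e
    rw [← e, ← hwd, hmap]
    exact hJ
  have hres : ∫⁻ x in {x | h x = ⊤}, h x * (‖(f : X → ℂ) x‖₊ : ℝ≥0∞) ^ (2:ℕ) ∂μ ≠ ⊤ :=
    ((setLIntegral_le_lintegral _ _).trans_lt htot).ne
  have hae : ∀ᵐ x ∂μ.restrict {x | h x = ⊤},
      h x * (‖(f : X → ℂ) x‖₊ : ℝ≥0∞) ^ (2:ℕ) < ⊤ :=
    ae_lt_top' (hhm.aemeasurable.restrict.mul hfaem.restrict) hres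
  have hkey : ∀ᵐ x ∂μ.restrict {x | h x = ⊤}, (f : X → ℂ) x = 0 := by
    filter_upwards [hae, ae_restrict_mem hA] with x hx hxa
    rw [hxa] at hx
    by_contra hfx
    have : (‖(f : X → ℂ) x‖₊ : ℝ≥0∞) ^ (2:ℕ) ≠ 0 := by
      simp [pow_eq_zero_iff, nnnorm_eq_zero, hfx]
    rw [ENNReal.top_mul this] at hx
    exact absurd hx (lt_irrefl _)
  have hS0 : ∀ᵐ x ∂μ.restrict S, (f : X → ℂ) x = 0 :=
    ae_restrict_of_ae_restrict_of_subset hSA hkey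
  -- lower bound for the distance
  have hconst : (⇑(χ - f) : X → ℂ) =ᵐ[μ.restrict S] fun _ => (1 : ℂ) := by
    have h1 : (⇑(χ - f) : X → ℂ) =ᵐ[μ] ⇑χ - ⇑f := Lp.coeFn_sub χ f
    have h2 : (⇑χ : X → ℂ) =ᵐ[μ] S.indicator fun _ => (1:ℂ) := indicatorConstLp_coeFn
    filter_upwards [ae_restrict_of_ae h1, ae_restrict_of_ae h2, hS0,
      ae_restrict_mem hSm] with x hx1 hx2 hx3 hx4
    rw [hx1, Pi.sub_apply, hx2, hx3, Set.indicator_of_mem hx4, sub_zero]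
  have hlow : ((μ S) ^ (1 / (2:ℝ))) ≤ eLpNorm (⇑(χ - f)) 2 μ := by
    calc ((μ S) ^ (1 / (2:ℝ)))
        = eLpNorm (fun _ => (1:ℂ)) 2 (μ.restrict S) := by
          rw [eLpNorm_const' (1:ℂ) (by norm_num) (by norm_num)]
          simp [ENNReal.toReal_ofNat]
      _ = eLpNorm (⇑(χ - f)) 2 (μ.restrict S) := (eLpNorm_congr_ae hconst).symm
      _ ≤ eLpNorm (⇑(χ - f)) 2 μ := eLpNorm_mono_measure _ Measure.restrict_le_self
  have : ε ≤ dist χ f := by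
    rw [dist_eq_norm, Lp.norm_def, hε_def]
    exact ENNReal.toReal_mono (Lp.eLpNorm_ne_top _) hlow
  exact absurd hdist (not_lt.2 this)

end Aux

/-- `C_φ` is quasinormal iff for every Borel function `f : [0,∞) → [0,∞]`
(extended by `f(∞) = 0`), `E(f∘h_φ) = f∘h_φ∘φ` a.e. `[μ]`. -/
theorem stmt_16 {X : Type*} [m : MeasurableSpace X] (μ : Measure X) [SigmaFinite μ]
    (φ : X → X) (hφ : Measurable φ) (hns : μ.map φ ≪ μ)
    (hdense : Dense {f : Lp ℂ 2 μ | MemLp (fun x => f (φ x)) 2 μ}) :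
    QuasinormalComposition μ φ ↔
      ∀ f : ℝ≥0∞ → ℝ≥0∞, Measurable f → f ⊤ = 0 →
        ∀ g : X → ℝ≥0∞,
          IsCondExp μ φ (fun x => f ((μ.map φ).rnDeriv μ x)) g →
            g =ᵐ[μ] fun x => f ((μ.map φ).rnDeriv μ (φ x)) := by
  set h := (μ.map φ).rnDeriv μ with hh
  have hhm : Measurable h := Measure.measurable_rnDeriv _ _
  have hwd : μ.map φ = μ.withDensity h := (Measure.withDensity_rnDeriv_eq _ _ hns).symm
  constructor
  · -- forward direction
    intro hq f hf hftop g hg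
    obtain ⟨hgm, hgi⟩ := hg
    obtain ⟨G, hGm, hgG⟩ := exists_eq_comp_of_comap_measurable hgm
    have key : ∀ Δ : Set X, MeasurableSet Δ →
        ∫⁻ y in Δ, f (h y) * h y ∂μ = ∫⁻ y in Δ, G y * h y ∂μ := by
      intro Δ hΔ
      have e1 : ∫⁻ y in Δ, f (h y) * h y ∂μ = ∫⁻ y in Δ, f (h y) ∂(μ.map φ) := by
        rw [hwd]
        have e := setLIntegral_withDensity_eq_lintegral_mul₀' (μ := μ) hhm.aemeasurable
          (g := fun y => f (h y))
          (by rw [← hwd]; exact ((hf.comp hhm).aemeasurable.mono_ac hns)) hΔ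
        simp only [Pi.mul_apply] at e
        rw [e]
        exact lintegral_congr fun y => mul_comm _ _
      have e2 : ∫⁻ y in Δ, G y * h y ∂μ = ∫⁻ y in Δ, G y ∂(μ.map φ) := by
        rw [hwd]
        have e := setLIntegral_withDensity_eq_lintegral_mul₀' (μ := μ) hhm.aemeasurable
          (g := G) (by rw [← hwd]; exact hGm.aemeasurable.mono_ac hns) hΔ
        simp only [Pi.mul_apply] at e
        rw [e]
        exact lintegral_congr fun y => mul_comm _ _
      rw [e1, e2, setLIntegral_map (f := fun y => f (h y)) hΔ (hf.comp hhm) hφ,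
        setLIntegral_map hΔ hGm hφ]
      have e3 : ∫⁻ x in φ ⁻¹' Δ, f (h (φ x)) ∂μ = ∫⁻ x in φ ⁻¹' Δ, f (h x) ∂μ := by
        refine lintegral_congr_ae (ae_restrict_of_ae ?_)
        filter_upwards [hq] with x hx
        rw [← hh] at hx
        rw [← hx]
      rw [e3, hgi Δ hΔ]
      exact lintegral_congr fun x => by rw [hgG x]
    have haeq : (fun y => f (h y) * h y) =ᵐ[μ] fun y => G y * h y :=
      ae_eq_of_forall_setLIntegral_eq_of_sigmaFinite
        ((hf.comp hhm).mul hhm) (hGm.mul hhm) fun s hs _ => key s hs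
    have hGf : ∀ᵐ y ∂(μ.map φ), G y = f (h y) := by
      rw [hwd, ae_withDensity_iff hhm]
      filter_upwards [haeq] with x hx hx0
      by_cases hxt : h x = ⊤
      · have : f (h x) = 0 := by rw [hxt, hftop]
        rw [this, zero_mul] at hx
        rcases mul_eq_zero.1 hx.symm with hG0 | htop0
        · rw [hG0, this]
        · exact absurd (hxt ▸ htop0) ENNReal.top_ne_zero
      · have : G x = G x * h x * (h x)⁻¹ := by
          rw [mul_assoc, ENNReal.mul_inv_cancel hx0 hxt, mul_one]
        rw [this, ← hx, mul_assoc, ENNReal.mul_inv_cancel hx0 hxt, mul_one]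
    have : ∀ᵐ x ∂μ, G (φ x) = f (h (φ x)) := ae_of_ae_map hφ.aemeasurable hGf
    filter_upwards [this] with x hx
    rw [hgG x, hx]
  · -- backward direction
    intro hyp
    have hfin : ∀ᵐ x ∂μ, h x ≠ ⊤ := rnDeriv_ne_top_of_dense μ hφ hns hdense
    haveI : SigmaFinite (μ.map φ) := by
      rw [hwd]; exact SigmaFinite.withDensity_of_ne_top hfin
    -- key measure identity
    have key : ∀ S : Set ℝ≥0∞, MeasurableSet S → ⊤ ∉ S → ∀ Δ : Set X, MeasurableSet Δ →
        μ (h ⁻¹' S ∩ φ ⁻¹' Δ) = μ (φ ⁻¹' (h ⁻¹' S ∩ Δ)) := by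
      intro S hS hStop Δ hΔ
      set f : ℝ≥0∞ → ℝ≥0∞ := S.indicator (fun _ => 1) with hf_def
      have hfm : Measurable f := measurable_const.indicator hS
      have hftop : f ⊤ = 0 := Set.indicator_of_notMem hStop _
      obtain ⟨g, hg⟩ := exists_isCondExp μ hφ (hfm.comp hhm)
      have hgeq := hyp f hfm hftop g hg
      have h1 := hg.2 Δ hΔ
      have h2 : ∫⁻ x in φ ⁻¹' Δ, g x ∂μ = ∫⁻ x in φ ⁻¹' Δ, f (h (φ x)) ∂μ :=
        lintegral_congr_ae (ae_restrict_of_ae hgeq)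
      have e1 : ∀ x, f (h x) = (h ⁻¹' S).indicator (fun _ => (1:ℝ≥0∞)) x := by
        intro x
        rw [hf_def]
        by_cases hx : h x ∈ S
        · rw [Set.indicator_of_mem hx, Set.indicator_of_mem (Set.mem_preimage.2 hx)]
        · rw [Set.indicator_of_notMem hx,
            Set.indicator_of_notMem (fun hc => hx (Set.mem_preimage.1 hc))]
      have e2 : ∀ x, f (h (φ x)) = (φ ⁻¹' (h ⁻¹' S)).indicator (fun _ => (1:ℝ≥0∞)) x := by
        intro x
        rw [hf_def]
        by_cases hx : h (φ x) ∈ S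
        · rw [Set.indicator_of_mem hx,
            Set.indicator_of_mem (show x ∈ φ ⁻¹' (h ⁻¹' S) from hx)]
        · rw [Set.indicator_of_notMem hx,
            Set.indicator_of_notMem (show x ∉ φ ⁻¹' (h ⁻¹' S) from fun hc => hx hc)]
      have i1 : ∫⁻ x in φ ⁻¹' Δ, f (h x) ∂μ = μ (h ⁻¹' S ∩ φ ⁻¹' Δ) := by
        simp_rw [e1]
        rw [lintegral_indicator (hhm hS), setLIntegral_one,
          Measure.restrict_apply (hhm hS)]
      have i2 : ∫⁻ x in φ ⁻¹' Δ, f (h (φ x)) ∂μ = μ (φ ⁻¹' (h ⁻¹' S) ∩ φ ⁻¹' Δ) := by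
        simp_rw [e2]
        rw [lintegral_indicator (hφ (hhm hS)), setLIntegral_one,
          Measure.restrict_apply (hφ (hhm hS))]
      simp only [Function.comp] at h1
      rw [← i1, h1, h2, i2, ← Set.preimage_inter]
    -- use indicators of intervals
    have E1 : ∀ q : ℚ, μ (h ⁻¹' Set.Iic (Real.toNNReal q : ℝ≥0∞)
        ∩ φ ⁻¹' (h ⁻¹' Set.Ioi (Real.toNNReal q : ℝ≥0∞))) = 0 := by
      intro q
      have := key (Set.Iic (Real.toNNReal q : ℝ≥0∞)) measurableSet_Iic
        (by simp) (h ⁻¹' Set.Ioi (Real.toNNReal q : ℝ≥0∞)) (hhm measurableSet_Ioi)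
      rw [this]
      have : h ⁻¹' Set.Iic (Real.toNNReal q : ℝ≥0∞)
          ∩ h ⁻¹' Set.Ioi (Real.toNNReal q : ℝ≥0∞) = ∅ := by
        rw [← Set.preimage_inter]
        have : Set.Iic (Real.toNNReal q : ℝ≥0∞) ∩ Set.Ioi (Real.toNNReal q : ℝ≥0∞) = ∅ := by
          ext a; simp only [Set.mem_inter_iff, Set.mem_Iic, Set.mem_Ioi, Set.mem_empty_iff_false,
            iff_false, not_and, not_lt]
          exact fun hle => hle
        rw [this, Set.preimage_empty]
      rw [this]
      simp
    have E2 : ∀ q : ℚ, μ (h ⁻¹' Set.Ioo (Real.toNNReal q : ℝ≥0∞) ⊤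
        ∩ φ ⁻¹' (h ⁻¹' Set.Iic (Real.toNNReal q : ℝ≥0∞))) = 0 := by
      intro q
      have := key (Set.Ioo (Real.toNNReal q : ℝ≥0∞) ⊤) measurableSet_Ioo
        (by simp) (h ⁻¹' Set.Iic (Real.toNNReal q : ℝ≥0∞)) (hhm measurableSet_Iic)
      rw [this]
      have : h ⁻¹' Set.Ioo (Real.toNNReal q : ℝ≥0∞) ⊤
          ∩ h ⁻¹' Set.Iic (Real.toNNReal q : ℝ≥0∞) = ∅ := by
        rw [← Set.preimage_inter]
        have : Set.Ioo (Real.toNNReal q : ℝ≥0∞) ⊤ ∩ Set.Iic (Real.toNNReal q : ℝ≥0∞) = ∅ := by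
          ext a; simp only [Set.mem_inter_iff, Set.mem_Ioo, Set.mem_Iic, Set.mem_empty_iff_false,
            iff_false, not_and]
          intro hc hle
          exact absurd hle (not_le.2 hc.1)
        rw [this, Set.preimage_empty]
      rw [this]
      simp
    have hE1ae : ∀ᵐ x ∂μ, ∀ q : ℚ, ¬(h x ≤ (Real.toNNReal q : ℝ≥0∞)
        ∧ (Real.toNNReal q : ℝ≥0∞) < h (φ x)) := by
      rw [MeasureTheory.ae_all_iff]
      intro q
      have := measure_eq_zero_iff_ae_notMem.1 (E1 q)
      filter_upwards [this] with x hx hcon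
      exact hx ⟨hcon.1, hcon.2⟩
    have hE2ae : ∀ᵐ x ∂μ, ∀ q : ℚ, ¬((Real.toNNReal q : ℝ≥0∞) < h x ∧ h x < ⊤
        ∧ h (φ x) ≤ (Real.toNNReal q : ℝ≥0∞)) := by
      rw [MeasureTheory.ae_all_iff]
      intro q
      have := measure_eq_zero_iff_ae_notMem.1 (E2 q)
      filter_upwards [this] with x hx hcon
      exact hx ⟨⟨hcon.1, hcon.2.1⟩, hcon.2.2⟩
    filter_upwards [hfin, hE1ae, hE2ae] with x hx1 hx2 hx3
    rcases lt_trichotomy (h x) (h (φ x)) with hlt | heq | hgt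
    · obtain ⟨q, _, hq1, hq2⟩ := ENNReal.lt_iff_exists_rat_btwn.1 hlt
      exact absurd ⟨hq1.le, hq2⟩ (hx2 q)
    · exact heq
    · obtain ⟨q, _, hq1, hq2⟩ := ENNReal.lt_iff_exists_rat_btwn.1 hgt
      exact absurd ⟨hq2, lt_top_iff_ne_top.2 hx1, hq1.le⟩ (hx3 q)
end

section
/- Let (X, 𝒜, μ) be a σ-finite measure space and φ : X → X a nonsingular transformation such that C_φ is densely defined. Then the following are equivalent: (a) h_{φⁿ} = h_φⁿ a.e. [μ] for all n ≥ 0; (b) E(h_φ) = h_φ ∘ φ a.e. [μ] and E(h_{φⁿ}) = E(h_φ)ⁿ a.e. [μ] for all n ≥ 0. -/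
open MeasureTheory
open scoped ENNReal

/-- Trim of an s-finite measure is s-finite. -/
lemma sfinite_trim_aux {X : Type*} {m0 m2 : MeasurableSpace X} (hle : m2 ≤ m0)
    (ν : @Measure X m0) [SFinite ν] : SFinite (ν.trim hle) := by
  have heq : (ν.trim hle) = Measure.sum (fun n => (MeasureTheory.sfiniteSeq ν n).trim hle) := by
    refine @Measure.ext _ m2 _ _ (fun t ht => ?_)
    rw [trim_measurableSet_eq hle ht, Measure.sum_apply _ ht]
    conv_lhs => rw [← sum_sfiniteSeq ν]
    rw [Measure.sum_apply _ (hle t ht)]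
    congr 1
    ext n
    rw [trim_measurableSet_eq hle ht]
  haveI : ∀ n, IsFiniteMeasure ((MeasureTheory.sfiniteSeq ν n).trim hle) :=
    fun _ => isFiniteMeasure_trim hle
  rw [heq]
  infer_instance

/-- For densely defined `C_φ`: `h_{φⁿ} = h_φⁿ` a.e. `[μ]` for all `n ≥ 0` iff
`E(h_φ) = h_φ∘φ` a.e. `[μ]` and `E(h_{φⁿ}) = E(h_φ)ⁿ` a.e. `[μ]` for all `n ≥ 0`. -/
theorem stmt_18 {X : Type*} [m : MeasurableSpace X] (μ : Measure X) [SigmaFinite μ]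
    (φ : X → X) (hφ : Measurable φ) (hns : μ.map φ ≪ μ)
    (hdense : Dense {f : Lp ℂ 2 μ | MemLp (fun x => f (φ x)) 2 μ}) :
    (∀ n : ℕ, (μ.map φ^[n]).rnDeriv μ =ᵐ[μ]
        fun x => ((μ.map φ).rnDeriv μ x) ^ n) ↔
      ((∀ g : X → ℝ≥0∞, IsCondExp μ φ ((μ.map φ).rnDeriv μ) g →
          g =ᵐ[μ] fun x => (μ.map φ).rnDeriv μ (φ x)) ∧
        ∀ n : ℕ, ∀ g gn : X → ℝ≥0∞,
          IsCondExp μ φ ((μ.map φ).rnDeriv μ) g →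
            IsCondExp μ φ ((μ.map φ^[n]).rnDeriv μ) gn →
              gn =ᵐ[μ] fun x => (g x) ^ n) := by
  set h : X → ℝ≥0∞ := (μ.map φ).rnDeriv μ with hh
  have meas_h : Measurable h := Measure.measurable_rnDeriv _ _
  have hle : MeasurableSpace.comap φ m ≤ m := hφ.comap_le
  have hqmp : Measure.QuasiMeasurePreserving φ μ μ := ⟨hφ, hns⟩
  -- absolute continuity of iterates
  have habs : ∀ n : ℕ, μ.map φ^[n] ≪ μ := by
    intro n
    induction n with
    | zero =>
      simp only [Function.iterate_zero, Measure.map_id]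
      exact Measure.AbsolutelyContinuous.rfl
    | succ k ih =>
      rw [Function.iterate_succ' φ k, ← Measure.map_map hφ (hφ.iterate k)]
      exact (ih.map hφ).trans hns
  -- fact A : measure of preimage as integral of the derivative
  have factA : ∀ n : ℕ, ∀ S : Set X, MeasurableSet S →
      μ ((φ^[n]) ⁻¹' S) = ∫⁻ x in S, (μ.map φ^[n]).rnDeriv μ x ∂μ := by
    intro n S hS
    rw [← Measure.map_apply (hφ.iterate n) hS, Measure.setLIntegral_rnDeriv (habs n) S]
  have key1 : ∀ S : Set X, MeasurableSet S → μ (φ ⁻¹' S) = ∫⁻ x in S, h x ∂μ := by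
    intro S hS
    have := factA 1 S hS
    rwa [Function.iterate_one] at this
  -- change of variables
  have cov : ∀ (f : X → ℝ≥0∞), Measurable f → ∀ Δ : Set X, MeasurableSet Δ →
      ∫⁻ x in φ ⁻¹' Δ, f (φ x) ∂μ = ∫⁻ y in Δ, h y * f y ∂μ := by
    intro f hf Δ hΔ
    rw [← setLIntegral_map hΔ hf hφ]
    conv_lhs => rw [← Measure.withDensity_rnDeriv_eq _ _ hns]
    rw [restrict_withDensity hΔ, lintegral_withDensity_eq_lintegral_mul _ meas_h hf]
    rfl
  -- m₂-measurability of compositions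
  have measφ : Measurable[MeasurableSpace.comap φ m] φ :=
    Measurable.of_comap_le le_rfl
  have meascomp : ∀ (f : X → ℝ≥0∞), Measurable f →
      Measurable[MeasurableSpace.comap φ m] (fun x => f (φ x)) :=
    fun f hf => hf.comp measφ
  -- finiteness of h a.e.
  have hfin : ∀ᵐ x ∂μ, h x < ∞ := by
    by_contra hcon
    have hAmeas0 : MeasurableSet {x | h x = ∞} := meas_h (measurableSet_singleton ∞)
    have hpos : μ {x | h x = ∞} ≠ 0 := by
      intro h0
      apply hcon
      refine ae_iff.mpr ?_
      simpa [lt_top_iff_ne_top] using h0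
    obtain ⟨A, hAmeas, hAsub, hApos, hAfin⟩ :=
      Measure.exists_subset_measure_lt_top hAmeas0 (pos_iff_ne_zero.mpr hpos)
    set ε : ℝ := ((μ A) ^ (1/2 : ℝ)).toReal with hε_def
    have hεpos : 0 < ε := ENNReal.toReal_pos
      (ENNReal.rpow_pos hApos hAfin.ne).ne'
      (ENNReal.rpow_ne_top_of_nonneg (by norm_num) hAfin.ne)
    set ind : Lp ℂ 2 μ := indicatorConstLp 2 hAmeas hAfin.ne (1:ℂ) with hind_def
    obtain ⟨f, hfS, hdist⟩ := Metric.mem_closure_iff.mp (hdense ind) ε hεpos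
    have hsm := Lp.aestronglyMeasurable f
    set f' := hsm.mk f with hf'_def
    have hf'meas : Measurable f' := hsm.stronglyMeasurable_mk.measurable
    have hff' : ⇑f =ᵐ[μ] f' := hsm.ae_eq_mk
    have hcomp : MemLp (fun x => f' (φ x)) 2 μ := hfS.ae_eq (hqmp.ae_eq hff')
    have hFmeas : Measurable (fun y => (‖f' y‖₊ : ℝ≥0∞) ^ (2:ℕ)) :=
      hf'meas.nnnorm.coe_nnreal_ennreal.pow_const 2
    have hint : ∫⁻ x, (‖f' (φ x)‖₊ : ℝ≥0∞) ^ (2:ℕ) ∂μ < ∞ := by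
      have h2 := hcomp.2
      rw [eLpNorm_eq_lintegral_rpow_enorm_toReal (by norm_num) (by norm_num)] at h2
      have h3 : ((2:ℝ≥0∞)).toReal = (2:ℝ) := by norm_num
      rw [h3] at h2
      rw [ENNReal.rpow_lt_top_iff_of_pos (by norm_num : (0:ℝ) < 1/2)] at h2
      have h4 : ∀ y : ℝ≥0∞, y ^ (2:ℝ) = y ^ (2:ℕ) := by
        intro y
        rw [show ((2:ℝ)) = ((2:ℕ):ℝ) by norm_num, ENNReal.rpow_natCast]
      simpa [h4, enorm_eq_nnnorm] using h2
    have hcov := cov (fun y => (‖f' y‖₊ : ℝ≥0∞) ^ (2:ℕ)) hFmeas Set.univ MeasurableSet.univ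
    simp only [Set.preimage_univ, Measure.restrict_univ] at hcov
    have htot : ∫⁻ y, h y * (‖f' y‖₊ : ℝ≥0∞) ^ (2:ℕ) ∂μ < ∞ := by
      rw [← hcov]; exact hint
    have hA2 : ∫⁻ y in A, h y * (‖f' y‖₊ : ℝ≥0∞) ^ (2:ℕ) ∂μ < ∞ :=
      lt_of_le_of_lt (lintegral_mono' Measure.restrict_le_self le_rfl) htot
    have hae : ∀ᵐ y ∂(μ.restrict A), h y * (‖f' y‖₊ : ℝ≥0∞) ^ (2:ℕ) < ∞ :=
      ae_lt_top (meas_h.mul hFmeas) hA2.ne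
    have hzero : ⇑f =ᵐ[μ.restrict A] 0 := by
      filter_upwards [hae, ae_restrict_mem hAmeas, ae_restrict_of_ae hff'] with y hy hyA hfy
      simp only [Pi.zero_apply]
      by_contra hne
      have hf'ne : f' y ≠ 0 := by rw [← hfy]; exact hne
      have hFpos : 0 < (‖f' y‖₊ : ℝ≥0∞) ^ (2:ℕ) :=
        pos_iff_ne_zero.mpr (pow_ne_zero 2 (ENNReal.coe_ne_zero.mpr (nnnorm_ne_zero_iff.mpr hf'ne)))
      have hcontra : h y * (‖f' y‖₊ : ℝ≥0∞) ^ (2:ℕ) = ∞ := by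
        rw [hAsub hyA, ENNReal.top_mul hFpos.ne']
      rw [hcontra] at hy
      exact absurd hy (lt_irrefl _)
    have hlow : ε ≤ dist ind f := by
      rw [Lp.dist_def]
      have h1 : eLpNorm (⇑ind - ⇑f) 2 (μ.restrict A) ≤ eLpNorm (⇑ind - ⇑f) 2 μ :=
        eLpNorm_mono_measure _ Measure.restrict_le_self
      have h2 : eLpNorm (⇑ind - ⇑f) 2 (μ.restrict A) = eLpNorm (fun _ => (1:ℂ)) 2 (μ.restrict A) := by
        apply eLpNorm_congr_ae
        have hindA : ⇑ind =ᵐ[μ.restrict A] fun _ => (1:ℂ) := by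
          filter_upwards [ae_restrict_of_ae (indicatorConstLp_coeFn (p := 2) (hs := hAmeas)
            (hμs := hAfin.ne) (c := (1:ℂ))), ae_restrict_mem hAmeas] with y hy hyA
          rw [hy, Set.indicator_of_mem hyA]
        filter_upwards [hindA, hzero] with y hy1 hy2
        simp [Pi.sub_apply, hy1, hy2]
      have hμA0 : μ.restrict A ≠ 0 := by
        intro h0
        have : μ A = 0 := by
          rw [← Measure.restrict_apply_univ, h0]; simp
        exact absurd this hApos.ne'
      have h3 : eLpNorm (fun _ : X => (1:ℂ)) 2 (μ.restrict A) = (μ A) ^ (1/2 : ℝ) := by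
        rw [eLpNorm_const (1:ℂ) (by norm_num) hμA0]
        simp [Measure.restrict_apply_univ]
      have h4 : (μ A) ^ (1/2 : ℝ) ≤ eLpNorm (⇑ind - ⇑f) 2 μ := by
        rw [← h3, ← h2]; exact h1
      have h5 : eLpNorm (⇑ind - ⇑f) 2 μ ≠ ∞ := by
        rw [eLpNorm_congr_ae (Lp.coeFn_sub ind f).symm]
        exact Lp.eLpNorm_ne_top (ind - f)
      exact ENNReal.toReal_mono h5 h4
    exact absurd hdist (not_lt.mpr hlow)
  -- sigma-finiteness of the trimmed measure
  have hσtrim : SigmaFinite (μ.trim hle) := by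
    set s : ℕ → Set X := fun n =>
      φ ⁻¹' (MeasureTheory.spanningSets μ n ∩ {y | h y ≤ (n : ℝ≥0∞)}) ∪ φ ⁻¹' {y | h y = ∞}
      with hs_def
    have hIic : ∀ n : ℕ, MeasurableSet {y | h y ≤ (n : ℝ≥0∞)} :=
      fun _ => measurableSet_le meas_h measurable_const
    have hsm : ∀ n, MeasurableSet[MeasurableSpace.comap φ m] (s n) := by
      intro n
      refine MeasurableSet.union ?_ ?_
      · exact ⟨_, (measurableSet_spanningSets μ n).inter (hIic n), rfl⟩
      · exact ⟨_, meas_h (measurableSet_singleton ∞), rfl⟩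
    have hmuinf : μ {y | h y = ∞} = 0 := by
      have := ae_iff.mp hfin
      simpa [lt_top_iff_ne_top] using this
    have hfin' : ∀ n, (μ.trim hle) (s n) < ∞ := by
      intro n
      rw [trim_measurableSet_eq hle (hsm n)]
      refine lt_of_le_of_lt (measure_union_le _ _) ?_
      have h1 : μ (φ ⁻¹' (MeasureTheory.spanningSets μ n ∩ {y | h y ≤ (n : ℝ≥0∞)})) ≤
          (n : ℝ≥0∞) * μ (MeasureTheory.spanningSets μ n) := by
        rw [key1 _ ((measurableSet_spanningSets μ n).inter (hIic n))]
        calc ∫⁻ y in MeasureTheory.spanningSets μ n ∩ {y | h y ≤ (n : ℝ≥0∞)}, h y ∂μ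
            ≤ ∫⁻ _ in MeasureTheory.spanningSets μ n ∩ {y | h y ≤ (n : ℝ≥0∞)}, (n : ℝ≥0∞) ∂μ := by
              refine setLIntegral_mono' ((measurableSet_spanningSets μ n).inter
                (hIic n)) (fun y hy => hy.2)
          _ = (n : ℝ≥0∞) * μ (MeasureTheory.spanningSets μ n ∩ {y | h y ≤ (n : ℝ≥0∞)}) := by
              rw [setLIntegral_const]
          _ ≤ (n : ℝ≥0∞) * μ (MeasureTheory.spanningSets μ n) := by
              gcongr; exact Set.inter_subset_left
      have h2 : μ (φ ⁻¹' {y | h y = ∞}) = 0 := hqmp.preimage_null hmuinf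
      rw [h2, add_zero]
      exact lt_of_le_of_lt h1 (ENNReal.mul_lt_top (by simp)
        (measure_spanningSets_lt_top μ n))
    have hspan : ⋃ n, s n = Set.univ := by
      rw [Set.eq_univ_iff_forall]
      intro x
      by_cases hx : h (φ x) = ∞
      · exact Set.mem_iUnion.2 ⟨0, Or.inr hx⟩
      · obtain ⟨j, hj⟩ : ∃ j, φ x ∈ MeasureTheory.spanningSets μ j := by
          have := MeasureTheory.iUnion_spanningSets μ
          have : φ x ∈ ⋃ i, MeasureTheory.spanningSets μ i := by rw [this]; trivial
          exact Set.mem_iUnion.1 this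
        obtain ⟨c, hc⟩ := ENNReal.exists_nat_gt hx
        refine Set.mem_iUnion.2 ⟨max j c, Or.inl ⟨?_, ?_⟩⟩
        · exact MeasureTheory.monotone_spanningSets μ (le_max_left j c) hj
        · exact le_trans hc.le (by exact_mod_cast le_max_right j c)
    exact ⟨⟨⟨s, fun _ => trivial, hfin', hspan⟩⟩⟩
  -- uniqueness of conditional expectation
  have uniq : ∀ g₁ g₂ : X → ℝ≥0∞, Measurable[MeasurableSpace.comap φ m] g₁ →
      Measurable[MeasurableSpace.comap φ m] g₂ →
      (∀ Δ : Set X, MeasurableSet Δ →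
        ∫⁻ x in φ ⁻¹' Δ, g₁ x ∂μ = ∫⁻ x in φ ⁻¹' Δ, g₂ x ∂μ) →
      g₁ =ᵐ[μ] g₂ := by
    intro g₁ g₂ hg₁ hg₂ hint
    haveI := hσtrim
    refine ae_eq_of_ae_eq_trim (hm := hle) ?_
    refine ae_eq_of_forall_setLIntegral_eq_of_sigmaFinite hg₁ hg₂ ?_
    rintro s ⟨Δ, hΔ, rfl⟩ -
    rw [restrict_trim hle μ ⟨Δ, hΔ, rfl⟩, lintegral_trim _ hg₁, lintegral_trim _ hg₂]
    exact hint Δ hΔ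
  -- existence of conditional expectation
  have exCE : ∀ f : X → ℝ≥0∞, Measurable f → ∃ g, IsCondExp μ φ f g := by
    intro f hf
    haveI := hσtrim
    haveI : SFinite ((μ.withDensity f).trim hle) := sfinite_trim_aux hle _
    have habs' : (μ.withDensity f).trim hle ≪ μ.trim hle :=
      (withDensity_absolutelyContinuous μ f).trim hle
    refine ⟨((μ.withDensity f).trim hle).rnDeriv (μ.trim hle),
      Measure.measurable_rnDeriv _ _, ?_⟩
    intro Δ hΔ
    have hm₂ : MeasurableSet[MeasurableSpace.comap φ m] (φ ⁻¹' Δ) := ⟨Δ, hΔ, rfl⟩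
    calc ∫⁻ x in φ ⁻¹' Δ, f x ∂μ
        = (μ.withDensity f) (φ ⁻¹' Δ) := (withDensity_apply f (hφ hΔ)).symm
      _ = ((μ.withDensity f).trim hle) (φ ⁻¹' Δ) := (trim_measurableSet_eq hle hm₂).symm
      _ = ∫⁻ x in φ ⁻¹' Δ, ((μ.withDensity f).trim hle).rnDeriv (μ.trim hle) x ∂(μ.trim hle) :=
          (Measure.setLIntegral_rnDeriv habs' _).symm
      _ = ∫⁻ x in φ ⁻¹' Δ, ((μ.withDensity f).trim hle).rnDeriv (μ.trim hle) x ∂μ := by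
          rw [restrict_trim hle μ hm₂, lintegral_trim _ (Measure.measurable_rnDeriv _ _)]
  constructor
  · -- forward direction
    intro H
    have part1 : ∀ g : X → ℝ≥0∞, IsCondExp μ φ h g → g =ᵐ[μ] fun x => h (φ x) := by
      intro g hg
      refine uniq g (fun x => h (φ x)) hg.1 (meascomp h meas_h) ?_
      intro Δ hΔ
      rw [← hg.2 Δ hΔ, cov h meas_h Δ hΔ]
      have e2 : ∫⁻ y in Δ, h y * h y ∂μ = ∫⁻ y in Δ, (μ.map φ^[2]).rnDeriv μ y ∂μ := by
        refine lintegral_congr_ae (Filter.EventuallyEq.restrict ?_)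
        filter_upwards [H 2] with x hx
        rw [hx, sq]
      rw [e2, ← factA 2 Δ hΔ]
      have : (φ^[2]) ⁻¹' Δ = φ ⁻¹' (φ ⁻¹' Δ) := by
        rw [show φ^[2] = φ ∘ φ^[1] from Function.iterate_succ' φ 1, Function.iterate_one]
        rfl
      rw [this, key1 _ (hφ hΔ)]
    refine ⟨part1, ?_⟩
    intro n g gn hg hgn
    have hgφ := part1 g hg
    have main : gn =ᵐ[μ] fun x => h (φ x) ^ n := by
      refine uniq gn (fun x => h (φ x) ^ n) hgn.1
        (meascomp (fun y => h y ^ n) (meas_h.pow_const n)) ?_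
      intro Δ hΔ
      rw [← hgn.2 Δ hΔ]
      have e1 : (φ^[n]) ⁻¹' (φ ⁻¹' Δ) = (φ^[n+1]) ⁻¹' Δ := by
        rw [Function.iterate_succ' φ n]; rfl
      rw [show (∫⁻ x in φ ⁻¹' Δ, (μ.map φ^[n]).rnDeriv μ x ∂μ)
            = μ ((φ^[n]) ⁻¹' (φ ⁻¹' Δ)) from (factA n _ (hφ hΔ)).symm, e1,
        factA (n+1) Δ hΔ, cov (fun y => h y ^ n) (meas_h.pow_const n) Δ hΔ]
      refine lintegral_congr_ae (Filter.EventuallyEq.restrict ?_)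
      filter_upwards [H (n+1)] with x hx
      rw [hx, pow_succ, mul_comm]
    refine main.trans ?_
    filter_upwards [hgφ] with x hx
    rw [hx]
  · -- backward direction
    rintro ⟨H1, H2⟩ n
    cases n with
    | zero =>
      simp only [Function.iterate_zero, Measure.map_id, pow_zero]
      exact Measure.rnDeriv_self μ
    | succ k =>
      obtain ⟨g, hg⟩ := exCE h meas_h
      obtain ⟨gk, hgk⟩ := exCE ((μ.map φ^[k]).rnDeriv μ) (Measure.measurable_rnDeriv _ _)
      have e1 : g =ᵐ[μ] fun x => h (φ x) := H1 g hg
      have e2 : gk =ᵐ[μ] fun x => g x ^ k := H2 k g gk hg hgk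
      have e3 : gk =ᵐ[μ] fun x => h (φ x) ^ k := by
        refine e2.trans ?_
        filter_upwards [e1] with x hx
        rw [hx]
      refine ae_eq_of_forall_setLIntegral_eq_of_sigmaFinite
        (Measure.measurable_rnDeriv _ _) (meas_h.pow_const (k+1)) ?_
      intro s hs _
      have e4 : (φ^[k+1]) ⁻¹' s = (φ^[k]) ⁻¹' (φ ⁻¹' s) := by
        rw [Function.iterate_succ' φ k]; rfl
      calc ∫⁻ x in s, (μ.map φ^[k+1]).rnDeriv μ x ∂μ
          = μ ((φ^[k+1]) ⁻¹' s) := (factA (k+1) s hs).symm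
        _ = μ ((φ^[k]) ⁻¹' (φ ⁻¹' s)) := by rw [e4]
        _ = ∫⁻ x in φ ⁻¹' s, (μ.map φ^[k]).rnDeriv μ x ∂μ := factA k _ (hφ hs)
        _ = ∫⁻ x in φ ⁻¹' s, gk x ∂μ := hgk.2 s hs
        _ = ∫⁻ x in φ ⁻¹' s, h (φ x) ^ k ∂μ :=
            lintegral_congr_ae (Filter.EventuallyEq.restrict e3)
        _ = ∫⁻ y in s, h y * h y ^ k ∂μ := cov (fun y => h y ^ k) (meas_h.pow_const k) s hs
        _ = ∫⁻ y in s, h y ^ (k+1) ∂μ := by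
            refine lintegral_congr (fun y => ?_)
            rw [pow_succ, mul_comm]
end

section
/- Let X = ℕ∪{0} with the counting measure μ on all subsets, and let φ : X → X be the constant map φ(x) = 0. Then φ is nonsingular, h_{φⁿ}(x) = h_φ(x)ⁿ for all x ∈ X and n ≥ 0 (with convention ∞⁰=1), but it is not the case that h_φ = h_φ ∘ φ μ-a.e. In particular, h_{φⁿ}(0) = ∞ and h_{φⁿ}(x) = 0 for x ≠ 0 when n ≥ 1, while h_φ(φ(x)) = ∞ for every x. -/
open MeasureTheory
open scoped ENNReal

instance : SigmaFinite (Measure.count : Measure ℕ) :=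
  ⟨⟨⟨fun n => {n}, fun _ => trivial,
    fun n => by simp [Measure.count_singleton], Set.iUnion_of_singleton ℕ⟩⟩⟩

private lemma count_ae_imp {p : ℕ → Prop}
    (h : ∀ᵐ x ∂(Measure.count : Measure ℕ), p x) : ∀ x, p x := by
  intro x
  by_contra hx
  have h0 : (Measure.count : Measure ℕ) {x} = 0 :=
    measure_mono_null (Set.singleton_subset_iff.mpr hx) (by rwa [MeasureTheory.ae_iff] at h)
  simp [Measure.count_singleton] at h0

private lemma map_eq : (Measure.count : Measure ℕ).map (fun _ => 0) =
    Measure.count.withDensity (fun x => if x = 0 then (⊤ : ℝ≥0∞) else 0) := by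
  have h1 : (fun x : ℕ => if x = 0 then (⊤ : ℝ≥0∞) else 0)
      = ({0} : Set ℕ).indicator (fun _ => ⊤) := by
    funext x; by_cases hx : x = 0 <;> simp [hx]
  rw [Measure.map_const, h1, withDensity_indicator (measurableSet_singleton 0),
    Measure.restrict_singleton, Measure.count_singleton, one_smul, withDensity_const]
  congr 1
  exact Measure.count_apply_infinite Set.infinite_univ

private lemma rn_eq : ((Measure.count : Measure ℕ).map (fun _ => 0)).rnDeriv Measure.count =
    (fun x => if x = 0 then (⊤ : ℝ≥0∞) else 0) := by
  have hm : Measurable (fun x : ℕ => if x = 0 then (⊤ : ℝ≥0∞) else 0) :=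
    measurable_of_countable _
  have h := Measure.rnDeriv_withDensity (Measure.count : Measure ℕ) hm
  rw [← map_eq] at h
  funext x
  exact count_ae_imp h x

private lemma iter_eq {n : ℕ} (hn : 1 ≤ n) : (fun _ : ℕ => 0)^[n] = (fun _ : ℕ => 0) := by
  obtain ⟨m, rfl⟩ := Nat.exists_eq_add_of_le hn
  rw [add_comm, Function.iterate_succ']
  funext x; rfl

/-- Counterexample: for `X = ℕ` with counting measure and `φ ≡ 0`, `φ` is
nonsingular and `h_{φⁿ} = h_φⁿ` everywhere (convention `∞⁰ = 1`), yet
`h_φ = h_φ∘φ` fails a.e.; indeed for `n ≥ 1`, `h_{φⁿ}(0) = ∞` and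
`h_{φⁿ}(x) = 0` for `x ≠ 0`, while `h_φ(φ(x)) = ∞` for all `x`. -/
theorem stmt_19 :
    let μ : Measure ℕ := Measure.count
    let φ : ℕ → ℕ := fun _ => 0
    (μ.map φ ≪ μ) ∧
    (∀ n : ℕ, ∀ x : ℕ,
      (μ.map φ^[n]).rnDeriv μ x = ((μ.map φ).rnDeriv μ x) ^ n) ∧
    ¬ ((μ.map φ).rnDeriv μ =ᵐ[μ] fun x => (μ.map φ).rnDeriv μ (φ x)) ∧
    (∀ n : ℕ, 1 ≤ n →
      (μ.map φ^[n]).rnDeriv μ 0 = ⊤ ∧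
        ∀ x : ℕ, x ≠ 0 → (μ.map φ^[n]).rnDeriv μ x = 0) ∧
    (∀ x : ℕ, (μ.map φ).rnDeriv μ (φ x) = ⊤) := by
  intro μ φ
  have hrn : (μ.map φ).rnDeriv μ = (fun x => if x = 0 then (⊤ : ℝ≥0∞) else 0) := rn_eq
  have hself : μ.rnDeriv μ = fun _ => 1 := by
    funext x; exact count_ae_imp (Measure.rnDeriv_self μ) x
  refine ⟨?_, ?_, ?_, ?_, ?_⟩
  · rw [map_eq]; exact withDensity_absolutelyContinuous _ _
  · intro n x
    rcases Nat.eq_zero_or_pos n with rfl | hn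
    · simp only [Function.iterate_zero, Measure.map_id, pow_zero, hself]
    · rw [show φ^[n] = φ from iter_eq hn, hrn]
      by_cases hx : x = 0 <;> simp [hx, ENNReal.top_pow hn.ne', zero_pow hn.ne']
  · intro h
    have := count_ae_imp h 1
    rw [hrn] at this; simp [φ] at this
  · intro n hn
    rw [show φ^[n] = φ from iter_eq hn, hrn]
    exact ⟨by simp, fun x hx => by simp [hx]⟩
  · intro x
    rw [hrn]; simp [φ]
end
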